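/- arXiv:1708.05480 — 7 statements merged into one kernel-verified Lean document; each statement's English description precedes it below -/
import Mathlib

section
/- For every binary sequence a of period N and every τ with 1 ≤ τ < N, the autocorrelation value R_a(τ) is congruent to N modulo 4. -/
lemma neg_one_pow_zmod4 (k : ℕ) : ((-1 : ZMod 4) ^ k) = 1 - 2 * k := by
  induction k with
  | zero => simp
  | succ n ih =>
      rw [pow_succ, ih]
      push_cast
      have h4 : (4 : ZMod 4) = 0 := rfl
      linear_combination (n : ZMod 4) * h4

/-- For every binary sequence `a` of period `N` and every `τ` with
`1 ≤ τ < N`, the autocorrelation `R_a(τ)` is congruent to `N` modulo `4`. -/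
theorem autocorrelation_mod_four (N : ℕ) [NeZero N] (a : ZMod N → ZMod 2) (τ : ZMod N)
    (hτ : 1 ≤ τ.val) :
    (∑ i : ZMod N, (-1 : ℤ) ^ ((a i).val + (a (i + τ)).val)) ≡ (N : ℤ) [ZMOD 4] := by
  have hshift : (∑ i : ZMod N, ((a (i + τ)).val : ZMod 4)) =
      ∑ i : ZMod N, ((a i).val : ZMod 4) :=
    Fintype.sum_equiv (Equiv.addRight τ) _ _ (fun i => rfl)
  refine (ZMod.intCast_eq_intCast_iff _ _ 4).mp ?_
  push_cast
  simp only [neg_one_pow_zmod4]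
  push_cast
  rw [Finset.sum_sub_distrib, ← Finset.mul_sum, Finset.sum_add_distrib, hshift,
    Finset.sum_const, Finset.card_univ, ZMod.card]
  have h4 : (4 : ZMod 4) = 0 := rfl
  linear_combination (-∑ i : ZMod N, ((a i).val : ZMod 4)) * h4
end

section
/- Let p = 4f+1 be an odd prime with f odd, θ a primitive root mod p, D_i the cyclotomic classes of order 4, β a primitive p-th root of unity in the splitting field F_{2^m} of x^p - 1 over F_2, and S(x) = Σ_{i ∈ D_0∪D_1} x^i, T(x) = Σ_{i ∈ D_1∪D_2} x^i. Then for every i with 1 ≤ i ≤ p-1, S(β^{4iθ}) + S(β^{4iθ³}) = 1 in F_{2^m}. -/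
/-- With `p = 4f+1` an odd prime, `f` odd, `θ` a primitive root mod `p`,
`β` a primitive `p`-th root of unity in a (splitting) field of characteristic 2, and
`S(x) = Σ_{i ∈ D_0 ∪ D_1} x^i`, one has `S(β^{4iθ}) + S(β^{4iθ³}) = 1`
for every `1 ≤ i ≤ p - 1`. -/
theorem S_sum_eq_one (p f : ℕ) (hp : p.Prime) (hpf : p = 4 * f + 1) (hf : Odd f)
    (θ : (ZMod p)ˣ) (hθ : ∀ u : (ZMod p)ˣ, u ∈ Subgroup.zpowers θ)
    (F : Type*) [Field F] [CharP F 2] (β : F) (hβ : orderOf β = p) :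
    let DD : Finset ℕ := (Finset.range p).filter fun t => ∃ j, j < f ∧
      ((t : ZMod p) = (θ : ZMod p) ^ (4 * j) ∨ (t : ZMod p) = (θ : ZMod p) ^ (1 + 4 * j))
    ∀ i : ℕ, 1 ≤ i → i ≤ p - 1 →
      (∑ t ∈ DD, (β ^ ((4 * (i : ZMod p) * (θ : ZMod p)).val)) ^ t) +
      (∑ t ∈ DD, (β ^ ((4 * (i : ZMod p) * (θ : ZMod p) ^ 3).val)) ^ t) = 1 := by
  intro DD i hi1 hi2
  classical
  haveI : Fact p.Prime := ⟨hp⟩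
  have hf1 : 1 ≤ f := hf.pos
  have hp5 : 5 ≤ p := by omega
  haveI : NeZero p := ⟨by omega⟩
  have hβp : β ^ p = 1 := by rw [← hβ]; exact pow_orderOf_eq_one β
  -- the order of θ is 4f
  have hθord : orderOf θ = 4 * f := by
    rw [orderOf_eq_card_of_forall_mem_zpowers hθ, Nat.card_eq_fintype_card,
      ZMod.card_units_eq_totient, Nat.totient_prime hp]
    omega
  set v : ℕ → ℕ := fun j => ((θ : ZMod p) ^ j).val with hv
  have hvinj : Set.InjOn v (Set.Iio (4 * f)) := by
    intro j1 h1 j2 h2 h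
    have e1 : ((θ : ZMod p) ^ j1) = ((θ : ZMod p) ^ j2) := by
      have := congrArg (fun n : ℕ => (n : ZMod p)) h
      simpa [hv, ZMod.natCast_val, ZMod.cast_id] using this
    have e2 : θ ^ j1 = θ ^ j2 := Units.ext (by
      rw [Units.val_pow_eq_pow_val, Units.val_pow_eq_pow_val]; exact e1)
    exact pow_injOn_Iio_orderOf (by simpa [hθord] using h1) (by simpa [hθord] using h2) e2
  set K : Finset ℕ := (Finset.range (4 * f)).filter (fun j => j % 4 ≤ 1) with hK
  have hKmem : ∀ x ∈ K, x ∈ Set.Iio (4 * f) := by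
    intro x hx
    simp only [hK, Finset.mem_filter, Finset.mem_range] at hx
    exact hx.1
  have hinjK : ∀ x ∈ K, ∀ y ∈ K, v x = v y → x = y :=
    fun x hx y hy h => hvinj (hKmem x hx) (hKmem y hy) h
  -- DD as an image
  have hDD : DD = K.image v := by
    ext t
    simp only [DD, hK, Finset.mem_image, Finset.mem_filter, Finset.mem_range]
    constructor
    · rintro ⟨htp, j, hjf, h | h⟩
      · refine ⟨4 * j, ⟨by omega, by omega⟩, ?_⟩
        show ((θ : ZMod p) ^ (4 * j)).val = t
        rw [← h, ZMod.val_cast_of_lt htp]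
      · refine ⟨1 + 4 * j, ⟨by omega, by omega⟩, ?_⟩
        show ((θ : ZMod p) ^ (1 + 4 * j)).val = t
        rw [← h, ZMod.val_cast_of_lt htp]
    · rintro ⟨j, ⟨hj4f, hj4⟩, rfl⟩
      refine ⟨ZMod.val_lt _, j / 4, by omega, ?_⟩
      have hcast : ((v j : ℕ) : ZMod p) = (θ : ZMod p) ^ j := by
        simp [hv, ZMod.natCast_val, ZMod.cast_id]
      rcases Nat.lt_or_ge (j % 4) 1 with h | h
      · left; rw [hcast]; congr 1; omega
      · right; rw [hcast]; congr 1; omega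
  -- nonvanishing facts
  have h4 : (4 : ZMod p) ≠ 0 := by
    have h' : ((4 : ℕ) : ZMod p) ≠ 0 := by
      intro h
      rw [ZMod.natCast_eq_zero_iff] at h
      have := Nat.le_of_dvd (by norm_num) h
      omega
    simpa using h'
  have hi0 : ((i : ℕ) : ZMod p) ≠ 0 := by
    intro h
    rw [ZMod.natCast_eq_zero_iff] at h
    have := Nat.le_of_dvd (by omega) h
    omega
  have hθ0 : (θ : ZMod p) ≠ 0 := Units.ne_zero θ
  have hA : (4 * (i : ZMod p) * (θ : ZMod p)) ≠ 0 :=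
    mul_ne_zero (mul_ne_zero h4 hi0) hθ0
  set a := (4 * (i : ZMod p) * (θ : ZMod p)).val with ha
  set b := (4 * (i : ZMod p) * (θ : ZMod p) ^ 3).val with hb
  have ha0 : a ≠ 0 := fun h => hA ((ZMod.val_eq_zero _).1 h)
  have hap : a < p := ZMod.val_lt _
  have hγ1 : β ^ a ≠ 1 := by
    intro h
    have hdvd := orderOf_dvd_of_pow_eq_one h
    rw [hβ] at hdvd
    have := Nat.le_of_dvd (by omega) hdvd
    omega
  -- geometric sum vanishes
  have hgeom : ∑ t ∈ Finset.range p, (β ^ a) ^ t = 0 := by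
    have hpow : (β ^ a) ^ p = 1 := by
      rw [← pow_mul, mul_comm, pow_mul, hβp, one_pow]
    have h := geom_sum_mul (β ^ a) p
    rw [hpow, sub_self] at h
    rcases mul_eq_zero.1 h with h' | h'
    · exact h'
    · exact absurd (sub_eq_zero.1 h') hγ1
  -- sum over the nonzero residues
  have hIco : ∑ t ∈ Finset.Ico 1 p, (β ^ a) ^ t = 1 := by
    have h := Finset.sum_eq_sum_Ico_succ_bot (show 0 < p by omega) (fun t => (β ^ a) ^ t)
    rw [← Finset.range_eq_Ico, hgeom, pow_zero] at h
    have h4' : -(1 : F) = ∑ t ∈ Finset.Ico 1 p, (β ^ a) ^ t :=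
      neg_eq_of_add_eq_zero_right h.symm
    rw [CharTwo.neg_eq] at h4'
    exact h4'.symm
  -- the image of range (4f) under v is exactly the nonzero residues
  have himg : (Finset.range (4 * f)).image v = Finset.Ico 1 p := by
    apply Finset.eq_of_subset_of_card_le
    · intro t ht
      simp only [Finset.mem_image, Finset.mem_range] at ht
      obtain ⟨j, hj, rfl⟩ := ht
      have hne : v j ≠ 0 := fun h => (pow_ne_zero j hθ0) ((ZMod.val_eq_zero _).1 h)
      have hlt : v j < p := ZMod.val_lt _
      simp only [Finset.mem_Ico]
      omega
    · rw [Finset.card_image_of_injOn (by rw [Finset.coe_range]; exact hvinj),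
        Finset.card_range, Nat.card_Ico]
      omega
  -- the key congruence:  b * v j ≡ a * v (j+2)  (mod p)
  have key : ∀ j : ℕ, (β ^ b) ^ v j = (β ^ a) ^ v (j + 2) := by
    intro j
    rw [← pow_mul, ← pow_mul]
    have hmod : b * v j ≡ a * v (j + 2) [MOD p] := by
      rw [← ZMod.natCast_eq_natCast_iff]
      push_cast
      rw [ha, hb, hv]
      simp only [ZMod.natCast_val, ZMod.cast_id]
      ring
    calc β ^ (b * v j) = β ^ (b * v j % p) := by
          conv_lhs => rw [← Nat.div_add_mod (b * v j) p]
          rw [pow_add, pow_mul, hβp, one_pow, one_mul]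
      _ = β ^ (a * v (j + 2) % p) := by rw [hmod]
      _ = β ^ (a * v (j + 2)) := by
          conv_rhs => rw [← Nat.div_add_mod (a * v (j + 2)) p]
          rw [pow_add, pow_mul, hβp, one_pow, one_mul]
  -- rewrite both sums
  have hS1 : ∑ t ∈ DD, (β ^ a) ^ t = ∑ j ∈ K, (β ^ a) ^ v j := by
    rw [hDD, Finset.sum_image hinjK]
  have hS2 : ∑ t ∈ DD, (β ^ b) ^ t
      = ∑ j ∈ (Finset.range (4 * f)).filter (fun j => ¬ (j % 4 ≤ 1)), (β ^ a) ^ v j := by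
    rw [hDD, Finset.sum_image hinjK]
    refine Finset.sum_nbij' (fun j => j + 2) (fun j => j - 2) ?_ ?_ ?_ ?_ ?_
    · intro x hx
      simp only [hK, Finset.mem_filter, Finset.mem_range] at hx ⊢
      omega
    · intro x hx
      simp only [hK, Finset.mem_filter, Finset.mem_range] at hx ⊢
      omega
    · intro x hx; show x + 2 - 2 = x; omega
    · intro x hx
      simp only [Finset.mem_filter, Finset.mem_range] at hx
      show x - 2 + 2 = x; omega
    · intro x hx; exact key x
  rw [hS1, hS2, hK, Finset.sum_filter_add_sum_filter_not]
  have hinjR : ∀ x ∈ Finset.range (4 * f), ∀ y ∈ Finset.range (4 * f), v x = v y → x = y :=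
    fun x hx y hy h => hvinj (by simpa using hx) (by simpa using hy) h
  calc ∑ x ∈ Finset.range (4 * f), (β ^ a) ^ v x
      = ∑ t ∈ (Finset.range (4 * f)).image v, (β ^ a) ^ t := (Finset.sum_image hinjR).symm
    _ = 1 := by rw [himg]; exact hIco
end

section
/- Let p = 4f+1 be an odd prime with f odd, β a primitive p-th root of unity over F_2, and let P_u(x) ∈ F_2[x] be the sequence polynomial P_u(x) = S(x^{4θ}) + x^p·S(x^{4θ³}) + x^{2p}·S(x⁴) + x^{3p}·S(x⁴) + P_b(x)·(x^{4p}-1)/(x⁴-1), where S(x) = Σ_{i∈D_0∪D_1} x^i and P_b(x) = b(0)+b(1)x+b(2)x²+b(3)x³. Then P_u(β^i) ≠ 0 for every i with 1 ≤ i ≤ p - 1. -/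
open Polynomial

/-- With the sequence polynomial
`P_u(x) = S(x^{4θ}) + x^p S(x^{4θ³}) + x^{2p} S(x⁴) + x^{3p} S(x⁴) + P_b(x)·(x^{4p}-1)/(x⁴-1)`
over `F_2`, one has `P_u(β^i) ≠ 0` for every `1 ≤ i ≤ p - 1`, where `β` is a primitive
`p`-th root of unity in a field of characteristic 2. -/
theorem Pu_nonzero_at_beta (p f : ℕ) (hp : p.Prime) (hpf : p = 4 * f + 1) (hf : Odd f)
    (θ : (ZMod p)ˣ) (hθ : ∀ u : (ZMod p)ˣ, u ∈ Subgroup.zpowers θ)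
    (F : Type*) [Field F] [CharP F 2] (φ : ZMod 2 →+* F) (β : F) (hβ : orderOf β = p)
    (b : Fin 4 → ZMod 2) :
    let DD : Finset ℕ := (Finset.range p).filter fun t => ∃ j, j < f ∧
      ((t : ZMod p) = (θ : ZMod p) ^ (4 * j) ∨ (t : ZMod p) = (θ : ZMod p) ^ (1 + 4 * j))
    -- `Scomp4 c` is `S(x^{4c})`, i.e. `S((x⁴)^c)` with exponents reduced modulo `p`
    let Scomp4 : ZMod p → Polynomial (ZMod 2) := fun c => ∑ t ∈ DD, X ^ (4 * (c * (t : ZMod p)).val)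
    let Pb : Polynomial (ZMod 2) := C (b 0) + C (b 1) * X + C (b 2) * X ^ 2 + C (b 3) * X ^ 3
    let Pu : Polynomial (ZMod 2) :=
      Scomp4 (θ : ZMod p) + X ^ p * Scomp4 ((θ : ZMod p) ^ 3) +
        X ^ (2 * p) * Scomp4 1 + X ^ (3 * p) * Scomp4 1 +
        Pb * (∑ j ∈ Finset.range p, X ^ (4 * j))
    ∀ i : ℕ, 1 ≤ i → i ≤ p - 1 → Pu.eval₂ φ (β ^ i) ≠ 0 := by
  intro DD Scomp4 Pb Pu i hi1 hi2
  haveI : Fact p.Prime := ⟨hp⟩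
  have hf1 : 1 ≤ f := by
    rcases hf with ⟨k, hk⟩; omega
  have hp5 : 5 ≤ p := by omega
  -- basic facts about β
  have hβp : β ^ p = 1 := by rw [← hβ]; exact pow_orderOf_eq_one β
  have hβ1 : β ≠ 1 := by
    intro h; rw [h, orderOf_one] at hβ; omega
  -- order of θ
  have hordθ : orderOf θ = 4 * f := by
    rw [orderOf_eq_card_of_forall_mem_zpowers hθ, Nat.card_eq_fintype_card,
      ZMod.card_units p]
    omega
  -- β powers depend only on exponent mod p
  have hpow : ∀ n : ℕ, β ^ n = β ^ ((n : ZMod p)).val := by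
    intro n
    rw [ZMod.val_natCast]
    have hm := pow_mod_orderOf β n
    rw [hβ] at hm
    exact hm.symm
  -- geometric sum vanishes
  have hgeom : ∀ x : F, x ^ p = 1 → x ≠ 1 → ∑ j ∈ Finset.range p, x ^ j = 0 := by
    intro x hxp hx1
    have h := geom_sum_mul x p
    rw [hxp, sub_self] at h
    rcases mul_eq_zero.mp h with h | h
    · exact h
    · exact absurd (sub_eq_zero.mp h) hx1
  set x : F := β ^ i with hxdef
  have hxp : x ^ p = 1 := by
    rw [hxdef, ← pow_mul, mul_comm, pow_mul, hβp, one_pow]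
  -- p does not divide 4 * i
  have hndvd : ¬ (p ∣ 4 * i) := by
    intro h
    rcases (hp.dvd_mul.mp h) with h | h
    · exact absurd (Nat.le_of_dvd (by norm_num) h) (by omega)
    · exact absurd (Nat.le_of_dvd (by omega) h) (by omega)
  have hx4 : x ^ 4 ≠ 1 := by
    intro h
    rw [hxdef, ← pow_mul, mul_comm] at h
    exact hndvd (hβ ▸ orderOf_dvd_of_pow_eq_one h)
  -- the geometric part of Pu evaluates to 0
  have hgeom4 : ∑ j ∈ Finset.range p, x ^ (4 * j) = 0 := by
    have := hgeom (x ^ 4) (by rw [← pow_mul, mul_comm, pow_mul, hxp, one_pow]) hx4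
    simpa [← pow_mul] using this
  -- ψ
  set ψ : ZMod p → F := fun z => β ^ z.val with hψdef
  have hψ0 : ψ 0 = 1 := by simp [hψdef]
  -- total sum of ψ over ZMod p is 0
  have htotal : ∑ z : ZMod p, ψ z = 0 := by
    rw [← hgeom β hβp hβ1]
    apply Finset.sum_nbij' (fun z : ZMod p => z.val) (fun n : ℕ => (n : ZMod p))
    · intro z _; exact Finset.mem_range.mpr (ZMod.val_lt z)
    · intro n hn; exact Finset.mem_univ _
    · intro z _; simp [ZMod.natCast_val, ZMod.cast_id]
    · intro n hn; rw [ZMod.val_natCast, Nat.mod_eq_of_lt (Finset.mem_range.mp hn)]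
    · intro z _; rfl
  -- sum of ψ over the units is 1 (i.e. nonzero)
  have hunits : ∑ u : (ZMod p)ˣ, ψ (u : ZMod p) = 1 := by
    have himg : (Finset.univ : Finset (ZMod p)).erase 0
        = Finset.univ.image (fun u : (ZMod p)ˣ => (u : ZMod p)) := by
      ext z
      simp only [Finset.mem_erase, Finset.mem_univ, and_true, Finset.mem_image, true_and]
      constructor
      · intro hz
        exact ⟨(Units.mk0 z hz), rfl⟩
      · rintro ⟨u, rfl⟩
        exact u.ne_zero
    have hsplit : ∑ z : ZMod p, ψ z
        = ψ 0 + ∑ z ∈ (Finset.univ : Finset (ZMod p)).erase 0, ψ z :=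
      (Finset.add_sum_erase _ _ (Finset.mem_univ 0)).symm
    rw [himg, Finset.sum_image (fun u _ v _ h => Units.ext h)] at hsplit
    rw [htotal, hψ0] at hsplit
    have h2 : (2 : F) = 0 := by
      have := CharP.cast_eq_zero F 2; exact_mod_cast this
    linear_combination -hsplit - h2
  -- reindexing sums over DD
  have hDD : ∀ g : ZMod p → F, ∑ t ∈ DD, g (t : ZMod p)
      = ∑ j ∈ Finset.range f,
          (g ((θ : ZMod p) ^ (4 * j)) + g ((θ : ZMod p) ^ (1 + 4 * j))) := by
    intro g
    have hmodeq : ∀ m n : ℕ, m < 4 * f → n < 4 * f → (θ : (ZMod p)ˣ) ^ m = θ ^ n → m = n := by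
      intro m n hm hn h
      have := (pow_eq_pow_iff_modEq).mp h
      rw [hordθ] at this
      unfold Nat.ModEq at this
      rwa [Nat.mod_eq_of_lt hm, Nat.mod_eq_of_lt hn] at this
    have hmodeq' : ∀ m n : ℕ, m < 4 * f → n < 4 * f →
        (θ : ZMod p) ^ m = (θ : ZMod p) ^ n → m = n := by
      intro m n hm hn h
      exact hmodeq m n hm hn (Units.ext (by push_cast; exact h))
    set A : Finset (ZMod p) := (Finset.range f).image (fun j => (θ : ZMod p) ^ (4 * j)) with hA
    set B : Finset (ZMod p) := (Finset.range f).image (fun j => (θ : ZMod p) ^ (1 + 4 * j)) with hB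
    have hDDimg : DD.image (fun t : ℕ => (t : ZMod p)) = A ∪ B := by
      ext z
      simp only [hA, hB, Finset.mem_image, Finset.mem_union, Finset.mem_filter,
        Finset.mem_range, DD]
      constructor
      · rintro ⟨t, ⟨htp, j, hj, h | h⟩, rfl⟩
        · exact Or.inl ⟨j, hj, h.symm⟩
        · exact Or.inr ⟨j, hj, h.symm⟩
      · rintro (⟨j, hj, rfl⟩ | ⟨j, hj, rfl⟩)
        · exact ⟨((θ : ZMod p) ^ (4 * j)).val, ⟨ZMod.val_lt _,
            j, hj, Or.inl (by simp [ZMod.natCast_val, ZMod.cast_id])⟩,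
            by simp [ZMod.natCast_val, ZMod.cast_id]⟩
        · exact ⟨((θ : ZMod p) ^ (1 + 4 * j)).val, ⟨ZMod.val_lt _,
            j, hj, Or.inr (by simp [ZMod.natCast_val, ZMod.cast_id])⟩,
            by simp [ZMod.natCast_val, ZMod.cast_id]⟩
    have hinjDD : ∀ t ∈ DD, ∀ t' ∈ DD, (t : ZMod p) = (t' : ZMod p) → t = t' := by
      intro t ht t' ht' h
      have ht1 : t < p := Finset.mem_range.mp (Finset.mem_filter.mp ht).1
      have ht2 : t' < p := Finset.mem_range.mp (Finset.mem_filter.mp ht').1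
      have := congrArg ZMod.val h
      rwa [ZMod.val_natCast, ZMod.val_natCast, Nat.mod_eq_of_lt ht1,
        Nat.mod_eq_of_lt ht2] at this
    rw [← Finset.sum_image hinjDD, hDDimg]
    have hdisj' : Disjoint A B := by
      rw [Finset.disjoint_left]
      rintro z hz hz'
      simp only [hA, hB, Finset.mem_image, Finset.mem_range] at hz hz'
      obtain ⟨j, hj, rfl⟩ := hz
      obtain ⟨j', hj', h⟩ := hz'
      have := hmodeq' (1 + 4 * j') (4 * j) (by omega) (by omega) h
      omega
    have hinjA : ∀ m ∈ Finset.range f, ∀ n ∈ Finset.range f,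
        (θ : ZMod p) ^ (4 * m) = (θ : ZMod p) ^ (4 * n) → m = n := by
      intro m hm n hn h
      have := hmodeq' (4 * m) (4 * n) (by simp at hm; omega) (by simp at hn; omega) h
      omega
    have hinjB : ∀ m ∈ Finset.range f, ∀ n ∈ Finset.range f,
        (θ : ZMod p) ^ (1 + 4 * m) = (θ : ZMod p) ^ (1 + 4 * n) → m = n := by
      intro m hm n hn h
      have := hmodeq' (1 + 4 * m) (1 + 4 * n) (by simp at hm; omega)
        (by simp at hn; omega) h
      omega
    rw [Finset.sum_union hdisj', hA, hB, Finset.sum_image hinjA,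
      Finset.sum_image hinjB, ← Finset.sum_add_distrib]
  -- splitting range (4*f) into blocks of 4
  have hblock : ∀ (h : ℕ → F) (m : ℕ), ∑ n ∈ Finset.range (4 * m), h n
      = ∑ j ∈ Finset.range m, (h (4 * j) + h (4 * j + 1) + h (4 * j + 2) + h (4 * j + 3)) := by
    intro h m
    induction m with
    | zero => simp
    | succ m ih =>
      have h4 : 4 * (m + 1) = 4 * m + 1 + 1 + 1 + 1 := by ring
      rw [h4, Finset.sum_range_succ, Finset.sum_range_succ, Finset.sum_range_succ,
        Finset.sum_range_succ, ih, Finset.sum_range_succ]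
      ring
  -- sums over range (4*f) of g(θ^n) equal sums over all units
  have hsumG : ∀ g : (ZMod p)ˣ → F,
      ∑ n ∈ Finset.range (4 * f), g (θ ^ n) = ∑ u : (ZMod p)ˣ, g u := by
    intro g
    have huniv : (Finset.univ : Finset (ZMod p)ˣ)
        = (Finset.range (4 * f)).image (fun n => θ ^ n) := by
      ext u
      simp only [Finset.mem_image, Finset.mem_range, Finset.mem_univ, true_iff]
      obtain ⟨n, hn⟩ := (mem_powers_iff_mem_zpowers.mpr (hθ u))
      refine ⟨n % (4 * f), Nat.mod_lt _ (by omega), ?_⟩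
      rw [← hordθ, pow_mod_orderOf θ n]
      exact hn
    have hinj : ∀ m ∈ Finset.range (4 * f), ∀ n ∈ Finset.range (4 * f),
        θ ^ m = θ ^ n → m = n := by
      intro m hm n hn h
      have := (pow_eq_pow_iff_modEq).mp h
      rw [hordθ] at this
      unfold Nat.ModEq at this
      rwa [Nat.mod_eq_of_lt (Finset.mem_range.mp hm),
        Nat.mod_eq_of_lt (Finset.mem_range.mp hn)] at this
    rw [huniv, Finset.sum_image hinj]
  -- translation invariance of sums over units
  have htrans : ∀ (w : (ZMod p)ˣ) (g : (ZMod p)ˣ → F),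
      ∑ u : (ZMod p)ˣ, g (w * u) = ∑ u : (ZMod p)ˣ, g u :=
    fun w g => Fintype.sum_bijective (w * ·) (Group.mulLeft_bijective w) _ _ (fun _ => rfl)
  -- the key element a = 4 i, as a unit
  have hi0 : (i : ZMod p) ≠ 0 := by
    intro h
    have := (ZMod.natCast_eq_zero_iff i p).mp h
    exact absurd (Nat.le_of_dvd (by omega) this) (by omega)
  have h40 : (4 : ZMod p) ≠ 0 := by
    intro h
    have : ((4 : ℕ) : ZMod p) = 0 := by exact_mod_cast h
    have := (ZMod.natCast_eq_zero_iff 4 p).mp this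
    exact absurd (Nat.le_of_dvd (by norm_num) this) (by omega)
  set a : ZMod p := (i : ZMod p) * 4 with hadef
  have ha0 : a ≠ 0 := mul_ne_zero hi0 h40
  set A : (ZMod p)ˣ := Units.mk0 a ha0 with hAdef
  -- evaluation of Scomp4 through ψ
  have hevalS : ∀ c : ZMod p, (Scomp4 c).eval₂ φ x = ∑ t ∈ DD, ψ (a * c * (t : ZMod p)) := by
    intro c
    simp only [Scomp4, eval₂_finset_sum, eval₂_X_pow]
    apply Finset.sum_congr rfl
    intro t _
    rw [hxdef, ← pow_mul, hpow (i * (4 * (c * (t : ZMod p)).val)), hψdef]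
    congr 1
    push_cast
    rw [ZMod.natCast_val, ZMod.cast_id]
    rw [hadef]
    ring
  -- now compute the evaluation of Pu
  have heval : Pu.eval₂ φ x = ∑ u : (ZMod p)ˣ, ψ (u : ZMod p) := by
    have h2p : x ^ (2 * p) = 1 := by rw [mul_comm, pow_mul, hxp, one_pow]
    have h3p : x ^ (3 * p) = 1 := by rw [mul_comm, pow_mul, hxp, one_pow]
    have hxpe : x ^ p = 1 := hxp
    have hPbpart : (∑ j ∈ Finset.range p, (X : Polynomial (ZMod 2)) ^ (4 * j)).eval₂ φ x = 0 := by
      simp only [eval₂_finset_sum, eval₂_X_pow]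
      exact hgeom4
    simp only [Pu, eval₂_add, eval₂_mul, eval₂_X_pow, hxpe, h2p, h3p, hPbpart, mul_zero,
      one_mul, add_zero]
    rw [hevalS, hevalS, hevalS]
    -- the two `c = 1` terms cancel in characteristic two
    have hcancel : ∀ y : F, y + y = 0 := fun y => by
      have h2 : (2 : F) = 0 := by exact_mod_cast CharP.cast_eq_zero F 2
      linear_combination y * h2
    rw [add_assoc, hcancel, add_zero]
    -- reindex both sums over DD
    have h1 : ∑ t ∈ DD, ψ (a * (θ : ZMod p) * (t : ZMod p))
        = ∑ j ∈ Finset.range f,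
            (ψ (a * (θ : ZMod p) * ((θ : ZMod p) ^ (4 * j)))
              + ψ (a * (θ : ZMod p) * ((θ : ZMod p) ^ (1 + 4 * j)))) :=
      hDD (fun z => ψ (a * (θ : ZMod p) * z))
    have h2' : ∑ t ∈ DD, ψ (a * (θ : ZMod p) ^ 3 * (t : ZMod p))
        = ∑ j ∈ Finset.range f,
            (ψ (a * (θ : ZMod p) ^ 3 * ((θ : ZMod p) ^ (4 * j)))
              + ψ (a * (θ : ZMod p) ^ 3 * ((θ : ZMod p) ^ (1 + 4 * j)))) :=
      hDD (fun z => ψ (a * (θ : ZMod p) ^ 3 * z))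
    rw [h1, h2', ← Finset.sum_add_distrib]
    -- rewrite each term as ψ of a unit
    set W : (ZMod p)ˣ := A * θ with hWdef
    have key : ∀ n : ℕ, ((W * θ ^ n : (ZMod p)ˣ) : ZMod p) = a * (θ : ZMod p) ^ (n + 1) := by
      intro n
      rw [hWdef, hAdef]
      simp only [Units.val_mul, Units.val_pow_eq_pow_val, Units.val_mk0]
      rw [pow_succ]
      ring
    have hstep : ∀ j : ℕ,
        (ψ (a * (θ : ZMod p) * ((θ : ZMod p) ^ (4 * j)))
            + ψ (a * (θ : ZMod p) * ((θ : ZMod p) ^ (1 + 4 * j))))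
          + (ψ (a * (θ : ZMod p) ^ 3 * ((θ : ZMod p) ^ (4 * j)))
            + ψ (a * (θ : ZMod p) ^ 3 * ((θ : ZMod p) ^ (1 + 4 * j))))
        = ψ ((W * θ ^ (4 * j) : (ZMod p)ˣ) : ZMod p)
            + ψ ((W * θ ^ (4 * j + 1) : (ZMod p)ˣ) : ZMod p)
            + ψ ((W * θ ^ (4 * j + 2) : (ZMod p)ˣ) : ZMod p)
            + ψ ((W * θ ^ (4 * j + 3) : (ZMod p)ˣ) : ZMod p) := by
      intro j
      rw [key (4 * j), key (4 * j + 1), key (4 * j + 2), key (4 * j + 3)]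
      have e1 : a * (θ : ZMod p) * ((θ : ZMod p) ^ (4 * j))
          = a * (θ : ZMod p) ^ (4 * j + 1) := by ring
      have e2 : a * (θ : ZMod p) * ((θ : ZMod p) ^ (1 + 4 * j))
          = a * (θ : ZMod p) ^ (4 * j + 1 + 1) := by ring
      have e3 : a * (θ : ZMod p) ^ 3 * ((θ : ZMod p) ^ (4 * j))
          = a * (θ : ZMod p) ^ (4 * j + 2 + 1) := by ring
      have e4 : a * (θ : ZMod p) ^ 3 * ((θ : ZMod p) ^ (1 + 4 * j))
          = a * (θ : ZMod p) ^ (4 * j + 3 + 1) := by ring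
      rw [e1, e2, e3, e4]
      ring
    rw [Finset.sum_congr rfl (fun j _ => hstep j)]
    have hb : ∑ n ∈ Finset.range (4 * f), ψ ((W * θ ^ n : (ZMod p)ˣ) : ZMod p)
        = ∑ j ∈ Finset.range f,
            (ψ ((W * θ ^ (4 * j) : (ZMod p)ˣ) : ZMod p)
              + ψ ((W * θ ^ (4 * j + 1) : (ZMod p)ˣ) : ZMod p)
              + ψ ((W * θ ^ (4 * j + 2) : (ZMod p)ˣ) : ZMod p)
              + ψ ((W * θ ^ (4 * j + 3) : (ZMod p)ˣ) : ZMod p)) :=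
      hblock (fun n => ψ ((W * θ ^ n : (ZMod p)ˣ) : ZMod p)) f
    rw [← hb]
    have hs : ∑ n ∈ Finset.range (4 * f), ψ ((W * θ ^ n : (ZMod p)ˣ) : ZMod p)
        = ∑ u : (ZMod p)ˣ, ψ ((W * u : (ZMod p)ˣ) : ZMod p) :=
      hsumG (fun u => ψ ((W * u : (ZMod p)ˣ) : ZMod p))
    have ht : ∑ u : (ZMod p)ˣ, ψ ((W * u : (ZMod p)ˣ) : ZMod p)
        = ∑ u : (ZMod p)ˣ, ψ ((u : (ZMod p)ˣ) : ZMod p) :=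
      htrans W (fun u => ψ ((u : (ZMod p)ˣ) : ZMod p))
    rw [hs, ht]
  rw [heval, hunits]
  exact one_ne_zero
end

section
/- Let p = 4f+1 be an odd prime with f odd and let P_u(x) = E(x) + P_b(x)·(x^{4p}-1)/(x⁴-1) in F_2[x], where E(x) = S(x^{4θ}) + x^p·S(x^{4θ³}) + x^{2p}·S(x⁴) + x^{3p}·S(x⁴) with S(x) = Σ_{i∈D_0∪D_1} x^i, and P_b(x) = b(0)+b(1)x+b(2)x²+b(3)x³. Then gcd(P_u(x), x⁴ - 1) = gcd(P_b(x), x⁴ - 1). -/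
open Polynomial

/-- With `P_u(x) = E(x) + P_b(x)·(x^{4p}-1)/(x⁴-1)` as in the construction,
`gcd(P_u(x), x⁴ - 1) = gcd(P_b(x), x⁴ - 1)` in `F_2[x]`. -/
theorem gcd_Pu_eq_gcd_Pb (p f : ℕ) (hp : p.Prime) (hpf : p = 4 * f + 1) (hf : Odd f)
    (θ : (ZMod p)ˣ) (hθ : ∀ u : (ZMod p)ˣ, u ∈ Subgroup.zpowers θ)
    (b : Fin 4 → ZMod 2) :
    let DD : Finset ℕ := (Finset.range p).filter fun t => ∃ j, j < f ∧
      ((t : ZMod p) = (θ : ZMod p) ^ (4 * j) ∨ (t : ZMod p) = (θ : ZMod p) ^ (1 + 4 * j))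
    let Scomp4 : ZMod p → Polynomial (ZMod 2) := fun c => ∑ t ∈ DD, X ^ (4 * (c * (t : ZMod p)).val)
    let Pb : Polynomial (ZMod 2) := C (b 0) + C (b 1) * X + C (b 2) * X ^ 2 + C (b 3) * X ^ 3
    let E : Polynomial (ZMod 2) :=
      Scomp4 (θ : ZMod p) + X ^ p * Scomp4 ((θ : ZMod p) ^ 3) +
        X ^ (2 * p) * Scomp4 1 + X ^ (3 * p) * Scomp4 1
    let Pu : Polynomial (ZMod 2) := E + Pb * (∑ j ∈ Finset.range p, X ^ (4 * j))
    gcd Pu (X ^ 4 - 1) = gcd Pb (X ^ 4 - 1) := by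
  intro DD Scomp4 Pb E Pu
  have hfact : Fact p.Prime := ⟨hp⟩
  set M : Polynomial (ZMod 2) := X ^ 4 - 1 with hM
  set T : Polynomial (ZMod 2) := ∑ j ∈ Finset.range p, X ^ (4 * j) with hT
  -- order of θ is 4f
  have hord : orderOf θ = 4 * f := by
    rw [orderOf_eq_card_of_forall_mem_zpowers hθ, Nat.card_eq_fintype_card,
      ZMod.card_units p, hpf]
    omega
  have hf1 : 1 ≤ f := hf.pos
  -- DD has cardinality 2f
  have hDDcard : DD.card = 2 * f := by
    have himg : DD = (Finset.range f ×ˢ Finset.range 2).image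
        (fun je : ℕ × ℕ => (((θ : ZMod p) ^ (je.2 + 4 * je.1)).val)) := by
      ext t
      simp only [DD, Finset.mem_filter, Finset.mem_range, Finset.mem_image,
        Finset.mem_product]
      constructor
      · rintro ⟨htp, j, hj, h | h⟩
        · exact ⟨(j, 0), ⟨hj, by omega⟩, by
            simp only [zero_add] at *
            rw [← h, ZMod.val_cast_of_lt htp]⟩
        · exact ⟨(j, 1), ⟨hj, by omega⟩, by
            rw [← h, ZMod.val_cast_of_lt htp]⟩
      · rintro ⟨⟨j, e⟩, ⟨hj, he⟩, rfl⟩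
        refine ⟨ZMod.val_lt _, j, hj, ?_⟩
        have hv : ((((θ : ZMod p) ^ (e + 4 * j)).val : ℕ) : ZMod p)
            = (θ : ZMod p) ^ (e + 4 * j) := by
          simp [ZMod.natCast_val, ZMod.cast_id]
        interval_cases e
        · left; simpa using hv
        · right; simpa using hv
    have hinj : Set.InjOn (fun je : ℕ × ℕ => (((θ : ZMod p) ^ (je.2 + 4 * je.1)).val))
        ((Finset.range f ×ˢ Finset.range 2 : Finset (ℕ × ℕ)) : Set (ℕ × ℕ)) := by
      rintro ⟨j, e⟩ hje ⟨j', e'⟩ hje' hval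
      simp only [Finset.coe_product, Finset.mem_coe, Set.mem_prod, Finset.mem_range,
        Finset.coe_range, Set.mem_Iio] at hje hje'
      have hzmod : (θ : ZMod p) ^ (e + 4 * j) = (θ : ZMod p) ^ (e' + 4 * j') := by
        have := congrArg (fun n : ℕ => (n : ZMod p)) hval
        simpa [ZMod.natCast_val, ZMod.cast_id] using this
      have hunits : θ ^ (e + 4 * j) = θ ^ (e' + 4 * j') := by
        ext
        simpa using hzmod
      have hmod : (e + 4 * j) ≡ (e' + 4 * j') [MOD 4 * f] := by
        rw [← hord]
        exact pow_eq_pow_iff_modEq.mp hunits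
      have h1 : e + 4 * j < 4 * f := by omega
      have h2 : e' + 4 * j' < 4 * f := by omega
      have heq : e + 4 * j = e' + 4 * j' := by
        have := hmod
        unfold Nat.ModEq at this
        rwa [Nat.mod_eq_of_lt h1, Nat.mod_eq_of_lt h2] at this
      have : e = e' ∧ j = j' := by omega
      simp [Prod.ext_iff, this.1, this.2]
    rw [himg, Finset.card_image_of_injOn hinj, Finset.card_product]
    simp [mul_comm]
  -- (X^4 - 1) divides each Scomp4 c
  have hS : ∀ c : ZMod p, M ∣ Scomp4 c := by
    intro c
    have hsum : Scomp4 c =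
        (∑ t ∈ DD, (X ^ (4 * (c * (t : ZMod p)).val) - 1)) + (DD.card : Polynomial (ZMod 2)) := by
      rw [Finset.sum_sub_distrib]
      simp [Scomp4]
    have hzero : ((DD.card : ℕ) : Polynomial (ZMod 2)) = 0 := by
      have h2 : ((2 : ℕ) : ZMod 2) = 0 := by decide
      rw [hDDcard, Nat.cast_mul, ← Polynomial.C_eq_natCast, h2, map_zero, zero_mul]
    rw [hsum, hzero, add_zero]
    refine Finset.dvd_sum fun t _ => ?_
    have := sub_dvd_pow_sub_pow (X ^ 4 : Polynomial (ZMod 2)) 1 ((c * (t : ZMod p)).val)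
    simpa [← pow_mul, hM] using this
  -- (X^4 - 1) divides E
  have hE : M ∣ E := by
    refine dvd_add (dvd_add (dvd_add (hS _) ?_) ?_) ?_
    · exact (hS _).mul_left _
    · exact (hS _).mul_left _
    · exact (hS _).mul_left _
  -- M = (X - 1)^4
  have hchar2 : (1 + 1 : ZMod 2) = 0 := by decide
  have hfact2 : Fact (Nat.Prime 2) := ⟨Nat.prime_two⟩
  have hMpow : M = (X - 1 : Polynomial (ZMod 2)) ^ 4 := by
    have h2 : (X - 1 : Polynomial (ZMod 2)) ^ 2 = X ^ 2 - 1 := by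
      simpa using sub_pow_char (p := 2) (X : Polynomial (ZMod 2)) 1
    have h4 : (X ^ 2 - 1 : Polynomial (ZMod 2)) ^ 2 = X ^ 4 - 1 := by
      have := sub_pow_char (p := 2) (X ^ 2 : Polynomial (ZMod 2)) 1
      simpa [← pow_mul] using this
    calc M = X ^ 4 - 1 := rfl
      _ = (X ^ 2 - 1) ^ 2 := h4.symm
      _ = ((X - 1) ^ 2) ^ 2 := by rw [h2]
      _ = (X - 1) ^ 4 := by ring
  -- T is coprime to M
  have hTeval : T.eval 1 = 1 := by
    rw [hT, eval_finset_sum]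
    simp only [eval_pow, eval_X, one_pow]
    rw [Finset.sum_const, Finset.card_range, nsmul_eq_mul, mul_one]
    have hodd : p % 2 = 1 := by omega
    rw [← ZMod.natCast_mod p 2, hodd, Nat.cast_one]
  have hcop : IsCoprime T M := by
    rw [hMpow]
    refine IsCoprime.pow_right ?_
    have hirr : Irreducible (X - C (1 : ZMod 2)) := irreducible_X_sub_C 1
    have hndvd : ¬ (X - C (1 : ZMod 2)) ∣ T := by
      rw [dvd_iff_isRoot]
      simp [IsRoot, hTeval]
    have := (hirr.coprime_iff_not_dvd).mpr hndvd
    simpa using this.symm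
  -- gcd Pu M = gcd (Pb * T) M
  have h1 : gcd Pu M = gcd (Pb * T) M := by
    apply gcd_eq_of_dvd_sub_left
    have : Pu - Pb * T = E := by simp [Pu, hT]
    rw [this]; exact hE
  rw [h1]
  -- gcd (Pb * T) M = gcd Pb M via coprimality
  apply dvd_antisymm_of_normalize_eq (normalize_gcd _ _) (normalize_gcd _ _)
  · refine dvd_gcd ?_ (gcd_dvd_right _ _)
    have hcop' : IsCoprime (gcd (Pb * T) M) T :=
      (hcop.of_isCoprime_of_dvd_right (gcd_dvd_right _ _)).symm
    exact hcop'.dvd_of_dvd_mul_right (gcd_dvd_left _ _)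
  · exact dvd_gcd ((gcd_dvd_left _ _).trans (dvd_mul_right _ _)) (gcd_dvd_right _ _)
end

section
/- Let p = 4f+1 be an odd prime with f odd, and let P_u(x) ∈ F_2[x] be as in the construction: P_u(x) = S(x^{4θ}) + x^p·S(x^{4θ³}) + x^{2p}·S(x⁴) + x^{3p}·S(x⁴) + P_b(x)·(x^{4p}-1)/(x⁴-1). If b = (0,0,0,0) then gcd(P_u(x), x^{4p} - 1) has degree 4; if b = (1,1,1,1) the gcd has degree 3; and if b = (1,0,1,0) or b = (0,1,0,1) the gcd has degree 2. Hence the linear complexity 4p - deg(gcd(P_u(x), x^{4p}-1)) of the corresponding sequence equals 4p - 4, 4p - 3, and 4p - 2 respectively. -/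
open Polynomial

/-- Degrees of `gcd(P_u(x), x^{4p} - 1)` for the various choices of `b`,
and the resulting linear complexities `4p - 4`, `4p - 3`, `4p - 2`. -/
theorem linear_complexity_of_u (p f : ℕ) (hp : p.Prime) (hpf : p = 4 * f + 1) (hf : Odd f)
    (θ : (ZMod p)ˣ) (hθ : ∀ u : (ZMod p)ˣ, u ∈ Subgroup.zpowers θ)
    (b : Fin 4 → ZMod 2) :
    let DD : Finset ℕ := (Finset.range p).filter fun t => ∃ j, j < f ∧
      ((t : ZMod p) = (θ : ZMod p) ^ (4 * j) ∨ (t : ZMod p) = (θ : ZMod p) ^ (1 + 4 * j))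
    let Scomp4 : ZMod p → Polynomial (ZMod 2) := fun c => ∑ t ∈ DD, X ^ (4 * (c * (t : ZMod p)).val)
    let Pb : Polynomial (ZMod 2) := C (b 0) + C (b 1) * X + C (b 2) * X ^ 2 + C (b 3) * X ^ 3
    let Pu : Polynomial (ZMod 2) :=
      Scomp4 (θ : ZMod p) + X ^ p * Scomp4 ((θ : ZMod p) ^ 3) +
        X ^ (2 * p) * Scomp4 1 + X ^ (3 * p) * Scomp4 1 +
        Pb * (∑ j ∈ Finset.range p, X ^ (4 * j))
    (b = ![0, 0, 0, 0] →
      (gcd Pu (X ^ (4 * p) - 1)).natDegree = 4 ∧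
      4 * p - (gcd Pu (X ^ (4 * p) - 1)).natDegree = 4 * p - 4) ∧
    (b = ![1, 1, 1, 1] →
      (gcd Pu (X ^ (4 * p) - 1)).natDegree = 3 ∧
      4 * p - (gcd Pu (X ^ (4 * p) - 1)).natDegree = 4 * p - 3) ∧
    (b = ![1, 0, 1, 0] ∨ b = ![0, 1, 0, 1] →
      (gcd Pu (X ^ (4 * p) - 1)).natDegree = 2 ∧
      4 * p - (gcd Pu (X ^ (4 * p) - 1)).natDegree = 4 * p - 2) := by
  intro DD Scomp4 Pb Pu
  haveI : Fact p.Prime := ⟨hp⟩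
  haveI : NeZero p := ⟨hp.pos.ne'⟩
  have hf1 : 1 ≤ f := hf.pos
  have hp5 : 5 ≤ p := by
    rcases hf with ⟨m, hm⟩
    omega
  have h2 : (2 : Polynomial (ZMod 2)) = 0 := CharTwo.two_eq_zero
  -- basic notation
  set tθ : ZMod p := (θ : ZMod p) with htθ
  have hSdef : Scomp4 = fun c => ∑ t ∈ DD, X ^ (4 * (c * (t : ZMod p)).val) := rfl
  have hPbdef : Pb = C (b 0) + C (b 1) * X + C (b 2) * X ^ 2 + C (b 3) * X ^ 3 := rfl
  have hPudef : Pu = Scomp4 tθ + X ^ p * Scomp4 (tθ ^ 3) +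
        X ^ (2 * p) * Scomp4 1 + X ^ (3 * p) * Scomp4 1 +
        Pb * (∑ j ∈ Finset.range p, X ^ (4 * j)) := rfl
  -- order of θ
  have horderU : orderOf θ = 4 * f := by
    rw [orderOf_eq_card_of_forall_mem_zpowers hθ, Nat.card_eq_fintype_card,
      ZMod.card_units_eq_totient, Nat.totient_prime hp]
    omega
  have hpoweq : ∀ a c : ℕ, (tθ ^ a = tθ ^ c ↔ a % (4 * f) = c % (4 * f)) := by
    intro a c
    have h1 : tθ ^ a = tθ ^ c ↔ θ ^ a = θ ^ c := by
      rw [htθ, ← Units.val_pow_eq_pow_val, ← Units.val_pow_eq_pow_val]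
      exact ⟨fun h => Units.ext h, fun h => congrArg _ h⟩
    rw [h1, pow_eq_pow_iff_modEq, horderU]
    rfl
  have htθne : tθ ≠ 0 := Units.ne_zero θ
  have hexp : ∀ a c : ℕ, a ≤ 4 * f → c ≤ 4 * f → tθ ^ a = tθ ^ c →
      (a = c ∨ (a = 0 ∧ c = 4 * f) ∨ (a = 4 * f ∧ c = 0)) := by
    intro a c ha hc h
    rw [hpoweq] at h
    rcases eq_or_lt_of_le ha with ha' | ha' <;> rcases eq_or_lt_of_le hc with hc' | hc'
    · left; omega
    · rw [ha', Nat.mod_self, Nat.mod_eq_of_lt hc'] at h; omega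
    · rw [hc', Nat.mod_self, Nat.mod_eq_of_lt ha'] at h; omega
    · rw [Nat.mod_eq_of_lt ha', Nat.mod_eq_of_lt hc'] at h; omega
  have hex : ∀ z : ZMod p, z ≠ 0 → ∃ m, m < 4 * f ∧ z = tθ ^ m := by
    intro z hz
    obtain ⟨n, hn⟩ := mem_powers_iff_mem_zpowers.mpr (hθ (isUnit_iff_ne_zero.mpr hz).unit)
    refine ⟨n % (4 * f), Nat.mod_lt _ (by omega), ?_⟩
    have h1 : tθ ^ (n % (4 * f)) = tθ ^ n := by
      rw [hpoweq, Nat.mod_mod_of_dvd _ dvd_rfl]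
    have hn2 : θ ^ n = (isUnit_iff_ne_zero.mpr hz).unit := hn
    rw [h1, htθ, ← Units.val_pow_eq_pow_val, hn2, IsUnit.unit_spec]
  have hval : ∀ z : ZMod p, ((z.val : ZMod p)) = z := by
    intro z; simp [ZMod.natCast_val, ZMod.cast_id]
  have h4ne : (4 : ZMod p) ≠ 0 := by
    intro h
    have h' : ((4 : ℕ) : ZMod p) = 0 := by push_cast; exact h
    rw [ZMod.natCast_eq_zero_iff] at h'
    have := Nat.le_of_dvd (by norm_num) h'
    omega
  -- membership in DD
  have hDDmem : ∀ t : ℕ, t ∈ DD ↔ t < p ∧ ∃ j, j < f ∧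
      ((t : ZMod p) = tθ ^ (4 * j) ∨ (t : ZMod p) = tθ ^ (1 + 4 * j)) := by
    intro t
    simp only [DD, Finset.mem_filter, Finset.mem_range, htθ]
  have hSapp : ∀ c : ZMod p, Scomp4 c = ∑ t ∈ DD, X ^ (4 * (c * (t : ZMod p)).val) :=
    fun c => rfl
  -- Φ and divisibility basics
  set Φ : Polynomial (ZMod 2) := ∑ j ∈ Finset.range p, X ^ j with hΦ
  have hgeom : Φ * (X - 1) = X ^ p - 1 := geom_sum_mul X p
  have hsub : ∀ x y : Polynomial (ZMod 2), x - y = x + y := CharTwo.sub_eq_add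
  have hΦk : ∀ m : ℕ, Φ ∣ X ^ (p * m) + 1 := by
    intro m
    have hd : Φ ∣ (X : Polynomial (ZMod 2)) ^ p - 1 := ⟨X - 1, hgeom.symm⟩
    have h1 : ((X : Polynomial (ZMod 2)) ^ p - 1) ∣ (X : Polynomial (ZMod 2)) ^ (p * m) - 1 := by
      have h0 := sub_dvd_pow_sub_pow ((X : Polynomial (ZMod 2)) ^ p) 1 m
      rwa [one_pow, ← pow_mul] at h0
    rw [← hsub]
    exact hd.trans h1
  have hL1 : ∀ a c : ℕ, ((a : ZMod p) = (c : ZMod p)) →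
      Φ ∣ ((X : Polynomial (ZMod 2)) ^ a + X ^ c) := by
    have key : ∀ a c : ℕ, a ≤ c → ((a : ZMod p) = (c : ZMod p)) →
        Φ ∣ ((X : Polynomial (ZMod 2)) ^ a + X ^ c) := by
      intro a c hac h
      have hmod : a ≡ c [MOD p] := (ZMod.natCast_eq_natCast_iff a c p).mp h
      obtain ⟨m, hm⟩ := (Nat.modEq_iff_dvd' hac).mp hmod
      have hc : c = a + p * m := by omega
      have h1 := (hΦk m).mul_left ((X : Polynomial (ZMod 2)) ^ a)
      have h2 : (X : Polynomial (ZMod 2)) ^ a * (X ^ (p * m) + 1) = X ^ a + X ^ c := by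
        rw [hc]; ring
      rwa [h2] at h1
    intro a c h
    rcases le_total a c with hac | hca
    · exact key a c hac h
    · rw [add_comm]; exact key c a hca h.symm
  have hsum_univ : ∀ g : ZMod p → Polynomial (ZMod 2),
      (∑ j ∈ Finset.range p, g (j : ZMod p)) = ∑ z : ZMod p, g z := by
    intro g
    refine Finset.sum_nbij' (fun j => (j : ZMod p)) (fun z => z.val) ?_ ?_ ?_ ?_ ?_
    · intro a _; exact Finset.mem_univ _
    · intro z _; exact Finset.mem_range.mpr (ZMod.val_lt z)
    · intro a ha; exact ZMod.val_cast_of_lt (Finset.mem_range.mp ha)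
    · intro z _; exact hval z
    · intro a _; rfl
  have hΦuniv : Φ = ∑ z : ZMod p, (X : Polynomial (ZMod 2)) ^ z.val := by
    rw [hΦ, ← hsum_univ (fun z => (X : Polynomial (ZMod 2)) ^ z.val)]
    exact Finset.sum_congr rfl fun j hj => by
      rw [ZMod.val_cast_of_lt (Finset.mem_range.mp hj)]
  classical
  set A : Finset (ZMod p) := DD.image (fun t : ℕ => (4 : ZMod p) * tθ * (t : ZMod p)) with hA
  set B : Finset (ZMod p) := DD.image (fun t : ℕ => (4 : ZMod p) * tθ ^ 3 * (t : ZMod p)) with hB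
  have hc1 : (4 : ZMod p) * tθ ≠ 0 := mul_ne_zero h4ne htθne
  have hc3 : (4 : ZMod p) * tθ ^ 3 ≠ 0 := mul_ne_zero h4ne (pow_ne_zero _ htθne)
  have hinj : ∀ c : ZMod p, c ≠ 0 → ∀ t1 ∈ DD, ∀ t2 ∈ DD,
      c * (t1 : ZMod p) = c * (t2 : ZMod p) → t1 = t2 := by
    intro c hc t1 h1 t2 h2 h
    have h3 := mul_left_cancel₀ hc h
    have h4 := congrArg ZMod.val h3
    rwa [ZMod.val_cast_of_lt ((hDDmem t1).mp h1).1,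
      ZMod.val_cast_of_lt ((hDDmem t2).mp h2).1] at h4
  have hAmem : ∀ z : ZMod p, z ∈ A ↔ ∃ j, j < f ∧
      (z = 4 * tθ ^ (1 + 4 * j) ∨ z = 4 * tθ ^ (2 + 4 * j)) := by
    intro z
    rw [hA, Finset.mem_image]
    constructor
    · rintro ⟨t, ht, rfl⟩
      obtain ⟨-, j, hj, hor | hor⟩ := (hDDmem t).mp ht
      · exact ⟨j, hj, Or.inl (by rw [hor]; ring)⟩
      · exact ⟨j, hj, Or.inr (by rw [hor]; ring)⟩
    · rintro ⟨j, hj, hor | hor⟩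
      · refine ⟨(tθ ^ (4 * j)).val, (hDDmem _).mpr ⟨ZMod.val_lt _, j, hj, Or.inl (hval _)⟩, ?_⟩
        rw [hval, hor]; ring
      · refine ⟨(tθ ^ (1 + 4 * j)).val, (hDDmem _).mpr ⟨ZMod.val_lt _, j, hj, Or.inr (hval _)⟩, ?_⟩
        rw [hval, hor]; ring
  have hBmem : ∀ z : ZMod p, z ∈ B ↔ ∃ j, j < f ∧
      (z = 4 * tθ ^ (3 + 4 * j) ∨ z = 4 * tθ ^ (4 + 4 * j)) := by
    intro z
    rw [hB, Finset.mem_image]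
    constructor
    · rintro ⟨t, ht, rfl⟩
      obtain ⟨-, j, hj, hor | hor⟩ := (hDDmem t).mp ht
      · exact ⟨j, hj, Or.inl (by rw [hor]; ring)⟩
      · exact ⟨j, hj, Or.inr (by rw [hor]; ring)⟩
    · rintro ⟨j, hj, hor | hor⟩
      · refine ⟨(tθ ^ (4 * j)).val, (hDDmem _).mpr ⟨ZMod.val_lt _, j, hj, Or.inl (hval _)⟩, ?_⟩
        rw [hval, hor]; ring
      · refine ⟨(tθ ^ (1 + 4 * j)).val, (hDDmem _).mpr ⟨ZMod.val_lt _, j, hj, Or.inr (hval _)⟩, ?_⟩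
        rw [hval, hor]; ring
  have hABdisj : ∀ z ∈ A, z ∉ B := by
    intro z hzA hzB
    obtain ⟨j, hj, h1⟩ := (hAmem z).mp hzA
    obtain ⟨j', hj', h3⟩ := (hBmem z).mp hzB
    rcases h1 with h1 | h1 <;> rcases h3 with h3 | h3 <;>
      (rw [h1] at h3
       have h5 := hexp _ _ (by omega) (by omega) (mul_left_cancel₀ h4ne h3)
       omega)
  have hcover : ∀ z : ZMod p, z ≠ 0 → z ∈ A ∨ z ∈ B := by
    intro z hz
    have hz4 : ((4 : ZMod p) * tθ)⁻¹ * z ≠ 0 := mul_ne_zero (inv_ne_zero hc1) hz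
    obtain ⟨m, hm, hzm⟩ := hex _ hz4
    have hze : z = 4 * tθ ^ (m + 1) := by
      have h6 : z = ((4 : ZMod p) * tθ) * (((4 : ZMod p) * tθ)⁻¹ * z) := by
        field_simp
      rw [h6, hzm]; ring
    obtain ⟨j, hj, hor⟩ : ∃ j, j < f ∧ (m + 1 = 1 + 4 * j ∨ m + 1 = 2 + 4 * j ∨
        m + 1 = 3 + 4 * j ∨ m + 1 = 4 + 4 * j) := ⟨m / 4, by omega, by omega⟩
    rcases hor with h | h | h | h
    · exact Or.inl ((hAmem z).mpr ⟨j, hj, Or.inl (by rw [hze, h])⟩)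
    · exact Or.inl ((hAmem z).mpr ⟨j, hj, Or.inr (by rw [hze, h])⟩)
    · exact Or.inr ((hBmem z).mpr ⟨j, hj, Or.inl (by rw [hze, h])⟩)
    · exact Or.inr ((hBmem z).mpr ⟨j, hj, Or.inr (by rw [hze, h])⟩)
  have hunion : A ∪ B = Finset.univ.erase (0 : ZMod p) := by
    ext z
    simp only [Finset.mem_union, Finset.mem_erase, Finset.mem_univ, and_true]
    constructor
    · rintro (h | h)
      · obtain ⟨j, hj, h1 | h1⟩ := (hAmem z).mp h <;>
          (rw [h1]; exact mul_ne_zero h4ne (pow_ne_zero _ htθne))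
      · obtain ⟨j, hj, h1 | h1⟩ := (hBmem z).mp h <;>
          (rw [h1]; exact mul_ne_zero h4ne (pow_ne_zero _ htθne))
    · exact hcover z
  have hU : (∑ t ∈ DD, (X : Polynomial (ZMod 2)) ^ (((4 : ZMod p) * tθ * (t : ZMod p)).val))
      + (∑ t ∈ DD, (X : Polynomial (ZMod 2)) ^ (((4 : ZMod p) * tθ ^ 3 * (t : ZMod p)).val))
      + 1 = Φ := by
    have e1 : (∑ z ∈ A, (X : Polynomial (ZMod 2)) ^ z.val)
        = ∑ t ∈ DD, (X : Polynomial (ZMod 2)) ^ (((4 : ZMod p) * tθ * (t : ZMod p)).val) := by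
      rw [hA]
      exact Finset.sum_image fun x hx y hy h => hinj _ hc1 x hx y hy h
    have e2 : (∑ z ∈ B, (X : Polynomial (ZMod 2)) ^ z.val)
        = ∑ t ∈ DD, (X : Polynomial (ZMod 2)) ^ (((4 : ZMod p) * tθ ^ 3 * (t : ZMod p)).val) := by
      rw [hB]
      exact Finset.sum_image fun x hx y hy h => hinj _ hc3 x hx y hy h
    rw [← e1, ← e2, ← Finset.sum_union (Finset.disjoint_left.mpr hABdisj), hunion]
    have e3 := Finset.sum_erase_add Finset.univ
      (fun z : ZMod p => (X : Polynomial (ZMod 2)) ^ z.val) (Finset.mem_univ (0 : ZMod p))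
    simp only [ZMod.val_zero, pow_zero] at e3
    rw [hΦuniv]
    exact e3
  -- Pu ≡ 1 mod Φ
  have hAc : ∀ c : ZMod p, Φ ∣ Scomp4 c +
      ∑ t ∈ DD, (X : Polynomial (ZMod 2)) ^ (((4 : ZMod p) * c * (t : ZMod p)).val) := by
    intro c
    rw [hSapp, ← Finset.sum_add_distrib]
    refine Finset.dvd_sum fun t ht => hL1 _ _ ?_
    push_cast [hval]
    ring
  set U1 : Polynomial (ZMod 2) :=
    ∑ t ∈ DD, (X : Polynomial (ZMod 2)) ^ (((4 : ZMod p) * tθ * (t : ZMod p)).val) with hU1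
  set U3 : Polynomial (ZMod 2) :=
    ∑ t ∈ DD, (X : Polynomial (ZMod 2)) ^ (((4 : ZMod p) * tθ ^ 3 * (t : ZMod p)).val) with hU3
  set G4 : Polynomial (ZMod 2) := ∑ j ∈ Finset.range p, X ^ (4 * j) with hG4def
  have hG4 : Φ ∣ G4 := by
    set S2 : Polynomial (ZMod 2) :=
      ∑ j ∈ Finset.range p, (X : Polynomial (ZMod 2)) ^ (((4 : ZMod p) * (j : ZMod p)).val) with hS2def
    have hS2 : S2 = Φ := by
      rw [hS2def, hsum_univ (fun z => (X : Polynomial (ZMod 2)) ^ (((4 : ZMod p) * z).val)), hΦuniv]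
      exact Fintype.sum_bijective (fun z : ZMod p => (4 : ZMod p) * z)
        (mulLeft_bijective₀ _ h4ne) _ _ (fun z => rfl)
    have hterm : Φ ∣ G4 + S2 := by
      rw [hG4def, hS2def, ← Finset.sum_add_distrib]
      refine Finset.dvd_sum fun j hj => hL1 _ _ ?_
      push_cast [hval]
      ring
    have h5 : G4 = (G4 + S2) + S2 := by linear_combination (-S2) * h2
    rw [h5]
    exact dvd_add hterm (hS2 ▸ dvd_refl Φ)
  have hF3 : Φ ∣ Pu + 1 := by
    have hp1 : Φ ∣ (X : Polynomial (ZMod 2)) ^ p + 1 := by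
      have h5 := hΦk 1; rwa [mul_one] at h5
    have hp2 : Φ ∣ (X : Polynomial (ZMod 2)) ^ (2 * p) + 1 := by
      have h5 := hΦk 2; rwa [mul_comm p 2] at h5
    have hp3 : Φ ∣ (X : Polynomial (ZMod 2)) ^ (3 * p) + 1 := by
      have h5 := hΦk 3; rwa [mul_comm p 3] at h5
    have hsplit : Pu + 1 = (Scomp4 tθ + U1) + (X ^ p + 1) * Scomp4 (tθ ^ 3)
        + (Scomp4 (tθ ^ 3) + U3) + (X ^ (2 * p) + 1) * Scomp4 1
        + (X ^ (3 * p) + 1) * Scomp4 1 + Pb * G4 + (U1 + U3 + 1) := by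
      rw [hPudef, hG4def]
      linear_combination (-(U1 + U3 + Scomp4 (tθ ^ 3) + Scomp4 1)) * h2
    rw [hsplit]
    have d1 : Φ ∣ Scomp4 tθ + U1 := by rw [hU1]; exact hAc tθ
    have d3 : Φ ∣ Scomp4 (tθ ^ 3) + U3 := by rw [hU3]; exact hAc (tθ ^ 3)
    have d7 : Φ ∣ U1 + U3 + 1 := hU ▸ dvd_refl Φ
    exact dvd_add (dvd_add (dvd_add (dvd_add (dvd_add (dvd_add d1 (hp1.mul_right _)) d3)
      (hp2.mul_right _)) (hp3.mul_right _)) (hG4.mul_left Pb)) d7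
  -- card of DD
  have hcard : DD.card = 2 * f := by
    have hinjDD : ∀ t1 ∈ DD, ∀ t2 ∈ DD, (t1 : ZMod p) = (t2 : ZMod p) → t1 = t2 := by
      intro t1 h1 t2 h3 h
      have h4 := congrArg ZMod.val h
      rwa [ZMod.val_cast_of_lt ((hDDmem t1).mp h1).1,
        ZMod.val_cast_of_lt ((hDDmem t2).mp h3).1] at h4
    have himg : DD.image (fun t : ℕ => (t : ZMod p)) =
        ((Finset.range f).image fun j => tθ ^ (4 * j)) ∪
        ((Finset.range f).image fun j => tθ ^ (1 + 4 * j)) := by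
      ext z
      simp only [Finset.mem_image, Finset.mem_union, Finset.mem_range]
      constructor
      · rintro ⟨t, ht, rfl⟩
        obtain ⟨-, j, hj, h | h⟩ := (hDDmem t).mp ht
        · exact Or.inl ⟨j, hj, h.symm⟩
        · exact Or.inr ⟨j, hj, h.symm⟩
      · rintro (⟨j, hj, rfl⟩ | ⟨j, hj, rfl⟩)
        · exact ⟨(tθ ^ (4 * j)).val, (hDDmem _).mpr ⟨ZMod.val_lt _, j, hj, Or.inl (hval _)⟩, hval _⟩
        · exact ⟨(tθ ^ (1 + 4 * j)).val, (hDDmem _).mpr ⟨ZMod.val_lt _, j, hj, Or.inr (hval _)⟩, hval _⟩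
    have h1 : DD.card = (DD.image (fun t : ℕ => (t : ZMod p))).card :=
      (Finset.card_image_of_injOn fun x hx y hy h => hinjDD x hx y hy h).symm
    have hdisj2 : Disjoint ((Finset.range f).image fun j => tθ ^ (4 * j))
        ((Finset.range f).image fun j => tθ ^ (1 + 4 * j)) := by
      rw [Finset.disjoint_left]
      rintro z hz1 hz2
      obtain ⟨j, hj, rfl⟩ := Finset.mem_image.mp hz1
      obtain ⟨j', hj', hji⟩ := Finset.mem_image.mp hz2
      rw [Finset.mem_range] at hj hj'
      have h5 := hexp _ _ (by omega) (by omega) hji.symm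
      omega
    rw [h1, himg, Finset.card_union_of_disjoint hdisj2,
      Finset.card_image_of_injOn, Finset.card_image_of_injOn, Finset.card_range]
    · omega
    · intro x hx y hy h
      rw [Finset.coe_range, Set.mem_Iio] at hx hy
      have h5 := hexp _ _ (by omega) (by omega) h
      omega
    · intro x hx y hy h
      rw [Finset.coe_range, Set.mem_Iio] at hx hy
      have h5 := hexp _ _ (by omega) (by omega) h
      omega
  -- Pu ≡ Pb mod (X+1)^4
  have hX4 : ∀ v : ℕ, ((X : Polynomial (ZMod 2)) ^ 4 + 1) ∣ X ^ (4 * v) + 1 := by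
    intro v
    have h1 := sub_dvd_pow_sub_pow ((X : Polynomial (ZMod 2)) ^ 4) 1 v
    rw [one_pow, ← pow_mul, hsub, hsub] at h1
    exact h1
  have hSdvd : ∀ c : ZMod p, ((X : Polynomial (ZMod 2)) ^ 4 + 1) ∣ Scomp4 c := by
    intro c
    have hzero : ((DD.card) • (1 : Polynomial (ZMod 2))) = 0 := by
      rw [hcard, nsmul_eq_mul, mul_one]
      push_cast
      linear_combination (f : Polynomial (ZMod 2)) * h2
    have h1 : Scomp4 c = ∑ t ∈ DD, ((X : Polynomial (ZMod 2)) ^ (4 * (c * (t : ZMod p)).val) + 1) := by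
      rw [Finset.sum_add_distrib, Finset.sum_const, hzero, add_zero, hSapp]
    rw [h1]
    exact Finset.dvd_sum fun t _ => hX4 _
  have hpcast : ((p : ℕ) : Polynomial (ZMod 2)) = 1 := by
    rw [hpf]
    push_cast
    linear_combination (2 * (f : Polynomial (ZMod 2))) * h2
  have hG41 : ((X : Polynomial (ZMod 2)) ^ 4 + 1) ∣ G4 + 1 := by
    have h1 : (∑ j ∈ Finset.range p, ((X : Polynomial (ZMod 2)) ^ (4 * j) + 1)) = G4 + 1 := by
      rw [Finset.sum_add_distrib, Finset.sum_const, Finset.card_range, nsmul_eq_mul,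
        mul_one, hpcast, hG4def]
    rw [← h1]
    exact Finset.dvd_sum fun j _ => hX4 j
  have hF4 : ((X : Polynomial (ZMod 2)) ^ 4 + 1) ∣ Pu + Pb := by
    have hsplit2 : Pu + Pb = Scomp4 tθ + X ^ p * Scomp4 (tθ ^ 3) + X ^ (2 * p) * Scomp4 1
        + X ^ (3 * p) * Scomp4 1 + Pb * (G4 + 1) := by
      rw [hPudef, hG4def]; ring
    rw [hsplit2]
    exact dvd_add (dvd_add (dvd_add (dvd_add (hSdvd tθ) ((hSdvd _).mul_left _))
      ((hSdvd 1).mul_left _)) ((hSdvd 1).mul_left _)) (hG41.mul_left Pb)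
  obtain ⟨Q, hQ⟩ := hF4
  have hX4pow : ((X : Polynomial (ZMod 2)) ^ 4 + 1) = (X + 1) ^ 4 := by
    rw [show ((X : Polynomial (ZMod 2)) + 1) ^ 4 = (((X : Polynomial (ZMod 2)) + 1) ^ 2) ^ 2 by ring,
      CharTwo.add_sq, one_pow, CharTwo.add_sq, one_pow, ← pow_mul]
  have hPuQ : Pu = Pb + ((X : Polynomial (ZMod 2)) + 1) ^ 4 * Q := by
    rw [← hX4pow]
    linear_combination hQ - Pb * h2
  -- factorization of X^{4p} - 1
  have hadd4 : ∀ a c : Polynomial (ZMod 2), (a + c) ^ 4 = a ^ 4 + c ^ 4 := by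
    intro a c
    rw [show (a + c) ^ 4 = ((a + c) ^ 2) ^ 2 by ring, CharTwo.add_sq, CharTwo.add_sq]
    ring
  have hΦp : Φ * (X - 1) = X ^ p - 1 := hgeom
  have hXp1 : (X : Polynomial (ZMod 2)) ^ p + 1 = (X + 1) * Φ := by
    rw [← hsub, ← hsub, ← hgeom]; ring
  have hfact : (X : Polynomial (ZMod 2)) ^ (4 * p) - 1 = (X + 1) ^ 4 * Φ ^ 4 := by
    rw [hsub, show (X : Polynomial (ZMod 2)) ^ (4 * p) = ((X : Polynomial (ZMod 2)) ^ p) ^ 4 by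
        rw [← pow_mul, mul_comm],
      show ((X : Polynomial (ZMod 2)) ^ p) ^ 4 + 1 = ((X : Polynomial (ZMod 2)) ^ p + 1) ^ 4 by
        rw [hadd4, one_pow],
      hXp1, mul_pow]
  -- coprimality
  obtain ⟨q0, hq0⟩ := hF3
  have hcop : IsCoprime Pu (Φ ^ 4) := by
    apply IsCoprime.pow_right
    exact ⟨1, q0, by linear_combination hq0 + (q0 * Φ - 1) * h2⟩
  have hXprime : Prime ((X : Polynomial (ZMod 2)) + 1) := by
    have h := prime_X_sub_C (1 : ZMod 2)
    rwa [map_one, CharTwo.sub_eq_add] at h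
  have hXne : ((X : Polynomial (ZMod 2)) + 1) ≠ 0 := hXprime.ne_zero
  have hnd : ((X : Polynomial (ZMod 2)) + 1).natDegree = 1 := by
    rw [show ((X : Polynomial (ZMod 2)) + 1) = X + C 1 by rw [map_one]]
    exact natDegree_X_add_C 1
  have hPbd : ∀ i : ℕ, i ≤ 4 → ((X : Polynomial (ZMod 2)) + 1) ^ i ∣ Pu →
      ((X : Polynomial (ZMod 2)) + 1) ^ i ∣ Pb := by
    intro i hi h
    have h1 : Pb = Pu + ((X : Polynomial (ZMod 2)) + 1) ^ 4 * Q := by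
      linear_combination -hPuQ - (((X : Polynomial (ZMod 2)) + 1) ^ 4 * Q) * h2
    rw [h1]
    exact dvd_add h ((pow_dvd_pow _ hi).mul_right Q)
  have key : ∀ k : ℕ, k ≤ 4 → ((X : Polynomial (ZMod 2)) + 1) ^ k ∣ Pu →
      (∀ i, i ≤ 4 → ((X : Polynomial (ZMod 2)) + 1) ^ i ∣ Pu → i ≤ k) →
      (gcd Pu ((X : Polynomial (ZMod 2)) ^ (4 * p) - 1)).natDegree = k := by
    intro k hk4 hdvd hmax
    have h1 : gcd Pu ((X : Polynomial (ZMod 2)) ^ (4 * p) - 1) ∣ ((X : Polynomial (ZMod 2)) + 1) ^ 4 := by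
      have hg2 := (gcd_dvd_right Pu ((X : Polynomial (ZMod 2)) ^ (4 * p) - 1)).trans
        (dvd_of_eq hfact)
      exact (hcop.of_isCoprime_of_dvd_left (gcd_dvd_left _ _)).dvd_of_dvd_mul_right hg2
    obtain ⟨i, hi4, hassoc⟩ := (dvd_prime_pow hXprime 4).mp h1
    have h3 : ((X : Polynomial (ZMod 2)) + 1) ^ k ∣ gcd Pu ((X : Polynomial (ZMod 2)) ^ (4 * p) - 1) :=
      dvd_gcd hdvd (by rw [hfact]; exact Dvd.dvd.mul_right (pow_dvd_pow _ hk4) _)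
    have hki : k ≤ i := (pow_dvd_pow_iff hXne hXprime.not_unit).mp (h3.trans hassoc.dvd)
    have hik : i ≤ k := hmax i hi4 (hassoc.symm.dvd.trans (gcd_dvd_left _ _))
    have hik' : i = k := le_antisymm hik hki
    subst hik'
    rw [natDegree_eq_of_degree_eq (degree_eq_degree_of_associated hassoc), natDegree_pow, hnd,
      mul_one]
  refine ⟨?_, ?_, ?_⟩
  · intro hb
    have hPb0 : Pb = 0 := by
      rw [hPbdef, hb]
      norm_num
      change C (0 : ZMod 2) * X ^ 2 + C 0 * X ^ 3 = 0
      simp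
    have hdvd : ((X : Polynomial (ZMod 2)) + 1) ^ 4 ∣ Pu := by
      rw [hPuQ, hPb0, zero_add]
      exact Dvd.intro Q rfl
    have h := key 4 le_rfl hdvd (fun i hi _ => hi)
    exact ⟨h, by rw [h]⟩
  · intro hb
    have hb0 : b 0 = 1 := by rw [hb]; rfl
    have hb1 : b 1 = 1 := by rw [hb]; rfl
    have hb2 : b 2 = 1 := by rw [hb]; rfl
    have hb3 : b 3 = 1 := by rw [hb]; rfl
    have hPb3 : Pb = ((X : Polynomial (ZMod 2)) + 1) ^ 3 := by
      rw [hPbdef, hb0, hb1, hb2, hb3, map_one]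
      linear_combination (-((X : Polynomial (ZMod 2)) ^ 2 + X)) * h2
    have hdvd : ((X : Polynomial (ZMod 2)) + 1) ^ 3 ∣ Pu := by
      rw [hPuQ, hPb3]
      exact ⟨1 + (X + 1) * Q, by ring⟩
    have hmax : ∀ i, i ≤ 4 → ((X : Polynomial (ZMod 2)) + 1) ^ i ∣ Pu → i ≤ 3 := by
      intro i hi hdPu
      by_contra hgt
      have hi4 : i = 4 := by omega
      subst hi4
      have h5 := hPbd 4 le_rfl hdPu
      rw [hPb3] at h5
      have h6 := natDegree_le_of_dvd h5 (pow_ne_zero 3 hXne)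
      rw [natDegree_pow, natDegree_pow, hnd] at h6
      omega
    have h := key 3 (by norm_num) hdvd hmax
    exact ⟨h, by rw [h]⟩
  · intro hb
    have hkey2 : (Pb = ((X : Polynomial (ZMod 2)) + 1) ^ 2 ∨
        Pb = ((X : Polynomial (ZMod 2)) + 1) ^ 2 * X) →
        (gcd Pu ((X : Polynomial (ZMod 2)) ^ (4 * p) - 1)).natDegree = 2 := by
      intro hPb2
      have hdvd : ((X : Polynomial (ZMod 2)) + 1) ^ 2 ∣ Pu := by
        rcases hPb2 with h | h
        · rw [hPuQ, h]; exact ⟨1 + (X + 1) ^ 2 * Q, by ring⟩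
        · rw [hPuQ, h]; exact ⟨X + (X + 1) ^ 2 * Q, by ring⟩
      have hmax : ∀ i, i ≤ 4 → ((X : Polynomial (ZMod 2)) + 1) ^ i ∣ Pu → i ≤ 2 := by
        intro i hi hdPu
        by_contra hgt
        have h3 : ((X : Polynomial (ZMod 2)) + 1) ^ 3 ∣ Pb :=
          (pow_dvd_pow _ (by omega : 3 ≤ i)).trans (hPbd i hi hdPu)
        rcases hPb2 with h | h
        · rw [h] at h3
          have h6 := natDegree_le_of_dvd h3 (pow_ne_zero 2 hXne)
          rw [natDegree_pow, natDegree_pow, hnd] at h6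
          omega
        · rw [h] at h3
          rw [show ((X : Polynomial (ZMod 2)) + 1) ^ 3 = ((X : Polynomial (ZMod 2)) + 1) ^ 2 * (X + 1) by ring] at h3
          have h7 : ((X : Polynomial (ZMod 2)) + 1) ∣ X :=
            (mul_dvd_mul_iff_left (pow_ne_zero 2 hXne)).mp h3
          have h8 : ((X : Polynomial (ZMod 2)) + 1) ∣ 1 := by
            have h9 := dvd_add h7 (dvd_refl ((X : Polynomial (ZMod 2)) + 1))
            rwa [show (X : Polynomial (ZMod 2)) + (X + 1) = 1 by linear_combination X * h2] at h9
          exact hXprime.not_unit (isUnit_of_dvd_one h8)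
      exact key 2 (by norm_num) hdvd hmax
    rcases hb with hb | hb
    · have hb0 : b 0 = 1 := by rw [hb]; rfl
      have hb1 : b 1 = 0 := by rw [hb]; rfl
      have hb2 : b 2 = 1 := by rw [hb]; rfl
      have hb3 : b 3 = 0 := by rw [hb]; rfl
      have h := hkey2 (Or.inl (by
        rw [hPbdef, hb0, hb1, hb2, hb3, map_one, map_zero]
        linear_combination (-(X : Polynomial (ZMod 2))) * h2))
      exact ⟨h, by rw [h]⟩
    · have hb0 : b 0 = 0 := by rw [hb]; rfl
      have hb1 : b 1 = 1 := by rw [hb]; rfl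
      have hb2 : b 2 = 0 := by rw [hb]; rfl
      have hb3 : b 3 = 1 := by rw [hb]; rfl
      have h := hkey2 (Or.inr (by
        rw [hPbdef, hb0, hb1, hb2, hb3, map_one, map_zero]
        linear_combination (-((X : Polynomial (ZMod 2)) ^ 2)) * h2))
      exact ⟨h, by rw [h]⟩
end

section
/- Let s and v be binary sequences of period N such that v is the complement of s (v(t) = s(t) + 1 in F_2 for all t), with minimal polynomials M_s(x) and M_v(x). Then M_v(x) = M_s(x)·(x-1) if (x-1) ∤ M_s(x); M_v(x) = M_s(x)/(x-1) if (x-1) | M_s(x) but (x-1)² ∤ M_s(x); and M_v(x) = M_s(x) if (x-1)² | M_s(x). In particular |LC(s) - LC(v)| ≤ 1. -/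
open Polynomial

private lemma zmod2_add_ne (x y : ZMod 2) (hx : x ≠ 0) (hy : y ≠ 0) : x + y = 0 := by revert x y; decide

private lemma cmp_helper (Ms Mv : Polynomial (ZMod 2)) (hMs0 : Ms ≠ 0) (hMv0 : Mv ≠ 0)
    (h : (Mv = Ms * (X - 1) ∧ ¬ (X - 1) ∣ Ms) ∨ (Ms = Mv * (X - 1) ∧ ¬ (X - 1) ∣ Mv) ∨
      (Mv = Ms ∧ (X - 1) ^ 2 ∣ Ms)) :
    (¬ (X - 1) ∣ Ms → Mv = Ms * (X - 1)) ∧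
    ((X - 1) ∣ Ms → ¬ (X - 1) ^ 2 ∣ Ms → Mv = Ms / (X - 1)) ∧
    ((X - 1) ^ 2 ∣ Ms → Mv = Ms) ∧
    |((Ms).natDegree : ℤ) - ((Mv).natDegree : ℤ)| ≤ 1 := by
  have hK0 : (X - 1 : Polynomial (ZMod 2)) ≠ 0 := by
    simpa using X_sub_C_ne_zero (1 : ZMod 2)
  have hKdeg : (X - 1 : Polynomial (ZMod 2)).natDegree = 1 := by
    simpa using natDegree_X_sub_C (1 : ZMod 2)
  rcases h with ⟨h1, h2⟩ | ⟨h1, h2⟩ | ⟨h1, h2⟩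
  · refine ⟨fun _ => h1, fun hd _ => absurd hd h2,
      fun hd => absurd ((dvd_pow_self _ two_ne_zero).trans hd) h2, ?_⟩
    rw [h1, natDegree_mul hMs0 hK0, hKdeg, abs_le]
    push_cast
    omega
  · refine ⟨?_, ?_, ?_, ?_⟩
    · intro h; exact absurd (h1 ▸ dvd_mul_left (X - 1) Mv) h
    · intro _ _; rw [h1, mul_div_cancel_right₀ _ hK0]
    · intro hd
      exfalso; apply h2
      rw [h1, sq] at hd
      exact (mul_dvd_mul_iff_right hK0).mp hd
    · rw [h1, natDegree_mul hMv0 hK0, hKdeg, abs_le]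
      push_cast
      omega
  · refine ⟨?_, fun _ hn => absurd h2 hn, fun _ => h1, ?_⟩
    · intro h; exact absurd ((dvd_pow_self _ two_ne_zero).trans h2) h
    · rw [h1]; simp

/-- If `v` is the complement of the binary sequence `s` of period `N`,
then the minimal polynomials `M_s, M_v` (given by `(x^N-1)/gcd(x^N-1, P)`)
satisfy the three-case relation, and in particular `|LC(s) - LC(v)| ≤ 1`. -/
theorem complement_minimal_polynomial (N : ℕ) (hN : 0 < N) (s : ℕ → ZMod 2) :
    let P : (ℕ → ZMod 2) → Polynomial (ZMod 2) :=
      fun a => ∑ i ∈ Finset.range N, C (a i) * X ^ i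
    let M : (ℕ → ZMod 2) → Polynomial (ZMod 2) :=
      fun a => (X ^ N - 1) / gcd (X ^ N - 1) (P a)
    let v : ℕ → ZMod 2 := fun t => s t + 1
    (¬ (X - 1) ∣ M s → M v = M s * (X - 1)) ∧
    ((X - 1) ∣ M s → ¬ (X - 1) ^ 2 ∣ M s → M v = M s / (X - 1)) ∧
    ((X - 1) ^ 2 ∣ M s → M v = M s) ∧
    |((M s).natDegree : ℤ) - ((M v).natDegree : ℤ)| ≤ 1 := by
  intro P M v
  set K : Polynomial (ZMod 2) := X - 1 with hKdef
  set D : Polynomial (ZMod 2) := X ^ N - 1 with hDdef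
  set J : Polynomial (ZMod 2) := ∑ i ∈ Finset.range N, X ^ i with hJdef
  have hDJ : J * K = D := geom_sum_mul X N
  have hD0 : D ≠ 0 := by
    rw [hDdef, ← C_1]
    exact X_pow_sub_C_ne_zero hN (1 : ZMod 2)
  have hJ0 : J ≠ 0 := fun h => hD0 (by rw [← hDJ, h, zero_mul])
  have hK0 : K ≠ 0 := fun h => hD0 (by rw [← hDJ, h, mul_zero])
  have hKirr : Irreducible K := by
    have := Polynomial.irreducible_X_sub_C (1 : ZMod 2)
    simpa [hKdef] using this
  have hKnorm : normalize K = K := by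
    have : (X - C (1 : ZMod 2)).Monic := monic_X_sub_C 1
    simpa [hKdef] using this.normalize_eq_self
  have hKdvd : ∀ p : Polynomial (ZMod 2), K ∣ p ↔ p.eval 1 = 0 := by
    intro p
    rw [hKdef, ← C_1, dvd_iff_isRoot]
    rfl
  -- P v = P s + J
  have hPv : P v = P s + J := by
    simp only [P, v, hJdef, map_add, add_mul, C_1, one_mul, Finset.sum_add_distrib]
  -- gcd decomposition
  set c : Polynomial (ZMod 2) := gcd J (P s) with hcdef
  have hc0 : c ≠ 0 := gcd_ne_zero_of_left hJ0
  set J₁ : Polynomial (ZMod 2) := J / c with hJ1def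
  set P₁ : Polynomial (ZMod 2) := P s / c with hP1def
  have hJ1 : c * J₁ = J := EuclideanDomain.mul_div_cancel' hc0 (gcd_dvd_left _ _)
  have hP1 : c * P₁ = P s := EuclideanDomain.mul_div_cancel' hc0 (gcd_dvd_right _ _)
  have hcop : IsCoprime J₁ P₁ := by
    have h := isCoprime_div_gcd_div_gcd (p := P s) (q := J) hJ0
    rw [gcd_comm (P s) J] at h
    exact h.symm
  have hJ10 : J₁ ≠ 0 := fun h => hJ0 (by rw [← hJ1, h, mul_zero])
  -- the key gcd cancellation
  have haux : ∀ q : Polynomial (ZMod 2), IsCoprime J₁ q → gcd (J₁ * K) q = gcd K q := by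
    intro q hq
    refine Associated.eq_of_normalized ?_ (normalize_gcd _ _) (normalize_gcd _ _)
    apply associated_of_dvd_dvd
    · refine dvd_gcd ?_ (gcd_dvd_right _ _)
      have h1 : IsCoprime (gcd (J₁ * K) q) J₁ :=
        (hq.of_isCoprime_of_dvd_right (gcd_dvd_right _ _)).symm
      exact h1.dvd_of_dvd_mul_left (gcd_dvd_left _ _)
    · exact gcd_dvd_gcd_mul_left K q J₁
  have hDfac : D = c * (J₁ * K) := by rw [← hDJ, ← hJ1, mul_assoc]
  -- D / c and D / (c * K)
  have hdivc : D / c = J₁ * K := by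
    rw [hDfac, mul_div_cancel_left₀ _ hc0]
  have hdivcK : D / (c * K) = J₁ := by
    rw [hDfac, show c * (J₁ * K) = c * K * J₁ by ring, mul_div_cancel_left₀ _ (mul_ne_zero hc0 hK0)]
  -- gcd formulas
  have hgs : gcd D (P s) = c * gcd K P₁ := by
    rw [hDfac, ← hP1, gcd_mul_left, normalize_gcd, haux P₁ hcop]
  have hcop' : IsCoprime J₁ (P₁ + J₁) := by
    simpa using hcop.add_mul_left_right 1
  have hgv : gcd D (P v) = c * gcd K (P₁ + J₁) := by
    have hPvfac : P v = c * (P₁ + J₁) := by rw [hPv, ← hP1, ← hJ1, mul_add]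
    rw [hDfac, hPvfac, gcd_mul_left, normalize_gcd, haux _ hcop']
  have hMs : M s = D / gcd D (P s) := rfl
  have hMv : M v = D / gcd D (P v) := rfl
  -- case analysis
  by_cases hkj : K ∣ J₁
  · -- Case 3: K²∣Ms, M v = M s
    have hkp : ¬ K ∣ P₁ := fun h => hKirr.not_isUnit (hcop.isUnit_of_dvd' hkj h)
    have hgk : gcd K P₁ = 1 := hKirr.gcd_eq_one_iff.mpr hkp
    have hkpj : ¬ K ∣ (P₁ + J₁) := by
      rw [hKdvd]
      rw [hKdvd] at hkp hkj
      simp only [eval_add]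
      rw [hkj]
      simpa using hkp
    have hgk' : gcd K (P₁ + J₁) = 1 := hKirr.gcd_eq_one_iff.mpr hkpj
    have hMs' : M s = J₁ * K := by rw [hMs, hgs, hgk, mul_one, hdivc]
    have hMv' : M v = J₁ * K := by rw [hMv, hgv, hgk', mul_one, hdivc]
    refine cmp_helper _ _ (by rw [hMs']; exact mul_ne_zero hJ10 hK0)
      (by rw [hMv']; exact mul_ne_zero hJ10 hK0) (Or.inr (Or.inr ⟨by rw [hMs', hMv'], ?_⟩))
    rw [hMs', sq]
    obtain ⟨t, ht⟩ := hkj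
    exact ⟨t, by rw [ht]; ring⟩
  · by_cases hkp : K ∣ P₁
    · -- Case 1: ¬K∣Ms, M v = M s * K
      have hgk : gcd K P₁ = K := (gcd_eq_left_iff K P₁ hKnorm).mpr hkp
      have hkpj : ¬ K ∣ (P₁ + J₁) := by
        rw [hKdvd]
        rw [hKdvd] at hkp hkj
        simp only [eval_add, hkp, zero_add]
        exact hkj
      have hgk' : gcd K (P₁ + J₁) = 1 := hKirr.gcd_eq_one_iff.mpr hkpj
      have hMs' : M s = J₁ := by rw [hMs, hgs, hgk, hdivcK]
      have hMv' : M v = J₁ * K := by rw [hMv, hgv, hgk', mul_one, hdivc]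
      exact cmp_helper _ _ (by rw [hMs']; exact hJ10)
        (by rw [hMv']; exact mul_ne_zero hJ10 hK0)
        (Or.inl ⟨by rw [hMs', hMv'], by rw [hMs']; exact hkj⟩)
    · -- Case 2: K‖Ms, M v = M s / K
      have hgk : gcd K P₁ = 1 := hKirr.gcd_eq_one_iff.mpr hkp
      have hkpj : K ∣ (P₁ + J₁) := by
        rw [hKdvd]
        rw [hKdvd] at hkp hkj
        simp only [eval_add]
        exact zmod2_add_ne _ _ hkp hkj
      have hgk' : gcd K (P₁ + J₁) = K := (gcd_eq_left_iff K _ hKnorm).mpr hkpj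
      have hMs' : M s = J₁ * K := by rw [hMs, hgs, hgk, mul_one, hdivc]
      have hMv' : M v = J₁ := by rw [hMv, hgv, hgk', hdivcK]
      exact cmp_helper _ _ (by rw [hMs']; exact mul_ne_zero hJ10 hK0)
        (by rw [hMv']; exact hJ10)
        (Or.inr (Or.inl ⟨by rw [hMs', hMv'], by rw [hMv']; exact hkj⟩))
end

section
/- Let p = 4f + 1 be an odd prime with f odd, and let β be a primitive p-th root of unity in the splitting field of x^p - 1 over F_2. With S(x) = Σ_{i∈D_0∪D_1} x^i and T(x) = Σ_{i∈D_1∪D_2} x^i, for any k ∈ Z_p^* one has S(β^k) = S(β) if k ∈ D_0, S(β^k) = T(β) if k ∈ D_1, S(β^k) = S(β) + 1 if k ∈ D_2, and S(β^k) = T(β) + 1 if k ∈ D_3. -/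
open Finset

private lemma aux_red {p f : ℕ} (ψ : ZMod p) (hψ4f : ψ ^ (4 * f) = 1)
    (c n : ℕ) : ψ ^ (c + 4 * n) = ψ ^ (c + 4 * (n % f)) := by
  have h : n = f * (n / f) + n % f := (Nat.div_add_mod n f).symm
  set q := n / f with hq
  set r := n % f with hr
  rw [show c + 4 * n = (c + 4 * r) + (4 * f) * q by rw [h]; ring,
    pow_add, pow_mul, hψ4f, one_pow, mul_one]

private lemma aux_canon_le {p f : ℕ} [Fact p.Prime] {ψ : ZMod p} (hψne : ψ ≠ 0)
    (hord : orderOf ψ = 4 * f)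
    {e1 e2 : ℕ} (h2 : e2 < 4 * f) (hle : e1 ≤ e2) (h : ψ ^ e1 = ψ ^ e2) : e1 = e2 := by
  have key : ψ ^ (e2 - e1) = 1 := by
    apply mul_left_cancel₀ (pow_ne_zero e1 hψne)
    rw [← pow_add, mul_one, show e1 + (e2 - e1) = e2 by omega, h]
  have hdvd : 4 * f ∣ e2 - e1 := hord ▸ orderOf_dvd_of_pow_eq_one key
  have := Nat.eq_zero_of_dvd_of_lt hdvd
  omega

private lemma aux_canon {p f : ℕ} [Fact p.Prime] {ψ : ZMod p} (hψne : ψ ≠ 0)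
    (hord : orderOf ψ = 4 * f)
    {e1 e2 : ℕ} (h1 : e1 < 4 * f) (h2 : e2 < 4 * f) (h : ψ ^ e1 = ψ ^ e2) : e1 = e2 := by
  rcases le_total e1 e2 with hle | hle
  · exact aux_canon_le hψne hord h2 hle h
  · exact (aux_canon_le hψne hord h1 hle h.symm).symm

private lemma aux_mul {p f : ℕ} [Fact p.Prime] {ψ : ZMod p} (hψne : ψ ≠ 0) (hψ4f : ψ ^ (4 * f) = 1)
    (hf : 0 < f) (m j0 : ℕ) (hj0 : j0 < f) (c : ℕ) (x : ZMod p) :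
    (∃ j, j < f ∧ x = ψ ^ (c + 4 * j)) ↔
      (∃ j, j < f ∧ ψ ^ (m + 4 * j0) * x = ψ ^ ((m + c) + 4 * j)) := by
  constructor
  · rintro ⟨j, hj, rfl⟩
    refine ⟨(j0 + j) % f, Nat.mod_lt _ hf, ?_⟩
    rw [← pow_add, show (m + 4 * j0) + (c + 4 * j) = (m + c) + 4 * (j0 + j) by ring]
    exact aux_red ψ hψ4f _ _
  · rintro ⟨j, hj, he⟩
    refine ⟨(f + j - j0) % f, Nat.mod_lt _ hf, ?_⟩
    apply mul_left_cancel₀ (pow_ne_zero (m + 4 * j0) hψne)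
    rw [he, ← pow_add,
      show (m + 4 * j0) + (c + 4 * ((f + j - j0) % f)) = ((m + 4 * j0) + c) + 4 * ((f + j - j0) % f) by ring,
      ← aux_red ψ hψ4f ((m + 4 * j0) + c) (f + j - j0),
      show ((m + 4 * j0) + c) + 4 * (f + j - j0) = ((m + c) + 4 * j) + 4 * f by omega,
      show ψ ^ (((m + c) + 4 * j) + 4 * f) = ψ ^ ((m + c) + 4 * j) by
        rw [pow_add, hψ4f, mul_one]]

private lemma aux_trans {p : ℕ} [NeZero p] {F : Type*} [Field F] (β : F)
    (P : ZMod p → Prop) (inst1 : DecidablePred fun t : ℕ => P (t : ZMod p))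
    (inst2 : DecidablePred P) (g : ZMod p → F) :
    ∑ t ∈ @Finset.filter ℕ (fun t => P (t : ZMod p)) inst1 (Finset.range p), g ((t : ZMod p))
      = ∑ x ∈ @Finset.filter (ZMod p) P inst2 Finset.univ, g x := by
  have hinst : inst1 = (fun t : ℕ => inst2 ((t : ZMod p)) : DecidablePred fun t : ℕ => P (t : ZMod p)) :=
    funext fun t => Subsingleton.elim _ _
  subst hinst
  refine Finset.sum_nbij' (fun t => ((t : ZMod p))) (fun x => x.val) ?_ ?_ ?_ ?_ ?_
  · intro t ht
    rw [Finset.mem_filter] at ht ⊢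
    exact ⟨Finset.mem_univ _, ht.2⟩
  · intro x hx
    rw [Finset.mem_filter] at hx ⊢
    refine ⟨Finset.mem_range.mpr (ZMod.val_lt x), ?_⟩
    rw [ZMod.natCast_rightInverse x]
    exact hx.2
  · intro t ht
    rw [Finset.mem_filter, Finset.mem_range] at ht
    simp [ZMod.val_natCast, Nat.mod_eq_of_lt ht.1]
  · intro x hx
    exact ZMod.natCast_rightInverse x
  · intro t ht
    rfl

/-- With `β` a primitive `p`-th root of unity in characteristic 2,
`S(x) = Σ_{i∈D_0∪D_1} x^i` and `T(x) = Σ_{i∈D_1∪D_2} x^i`, for `k ∈ Z_p^*` one has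
`S(β^k) = S(β), T(β), S(β)+1, T(β)+1` according as `k ∈ D_0, D_1, D_2, D_3`. -/
theorem S_beta_k_values (p f : ℕ) (hp : p.Prime) (hpf : p = 4 * f + 1) (hf : Odd f)
    (θ : (ZMod p)ˣ) (hθ : ∀ u : (ZMod p)ˣ, u ∈ Subgroup.zpowers θ)
    (F : Type*) [Field F] [CharP F 2] (β : F) (hβ : orderOf β = p) :
    let DD01 : Finset ℕ := (Finset.range p).filter fun t => ∃ j, j < f ∧
      ((t : ZMod p) = (θ : ZMod p) ^ (4 * j) ∨ (t : ZMod p) = (θ : ZMod p) ^ (1 + 4 * j))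
    let DD12 : Finset ℕ := (Finset.range p).filter fun t => ∃ j, j < f ∧
      ((t : ZMod p) = (θ : ZMod p) ^ (1 + 4 * j) ∨ (t : ZMod p) = (θ : ZMod p) ^ (2 + 4 * j))
    let Sβ : F := ∑ t ∈ DD01, β ^ t
    let Tβ : F := ∑ t ∈ DD12, β ^ t
    ∀ k : ZMod p, k ≠ 0 →
      ((∃ j < f, k = (θ : ZMod p) ^ (4 * j)) → ∑ t ∈ DD01, (β ^ k.val) ^ t = Sβ) ∧
      ((∃ j < f, k = (θ : ZMod p) ^ (1 + 4 * j)) → ∑ t ∈ DD01, (β ^ k.val) ^ t = Tβ) ∧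
      ((∃ j < f, k = (θ : ZMod p) ^ (2 + 4 * j)) → ∑ t ∈ DD01, (β ^ k.val) ^ t = Sβ + 1) ∧
      ((∃ j < f, k = (θ : ZMod p) ^ (3 + 4 * j)) → ∑ t ∈ DD01, (β ^ k.val) ^ t = Tβ + 1) := by
  classical
  intro DD01 DD12 Sβ Tβ k hk
  haveI : Fact p.Prime := ⟨hp⟩
  haveI : NeZero p := ⟨hp.ne_zero⟩
  have hfpos : 0 < f := hf.pos
  set ψ : ZMod p := ((θ : ZMod p)) with hψdef
  have hψne : ψ ≠ 0 := Units.ne_zero θ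
  have hordθ : orderOf θ = 4 * f := by
    rw [orderOf_eq_card_of_forall_mem_zpowers hθ, Nat.card_eq_fintype_card,
      ZMod.card_units p, hpf]
    omega
  have hordψ : orderOf ψ = 4 * f := by rw [hψdef, orderOf_units, hordθ]
  have hψ4f : ψ ^ (4 * f) = 1 := by rw [← hordψ]; exact pow_orderOf_eq_one ψ
  -- b-function
  set b : ZMod p → F := fun x => β ^ x.val with hbdef
  have hb : ∀ n : ℕ, β ^ n = b ((n : ZMod p)) := by
    intro n
    rw [hbdef]
    simp only []
    rw [ZMod.val_natCast, ← hβ, pow_mod_orderOf]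
  -- disjointness of classes
  have hQdisj : ∀ a c : ℕ, a < 4 → c < 4 → a ≠ c → ∀ x : ZMod p,
      (∃ j, j < f ∧ x = ψ ^ (a + 4 * j)) → (∃ j, j < f ∧ x = ψ ^ (c + 4 * j)) → False := by
    rintro a c ha hc hac x ⟨j1, hj1, rfl⟩ ⟨j2, hj2, h⟩
    have := aux_canon hψne hordψ (by omega) (by omega) h
    omega
  -- cover
  have hcover : ∀ x : ZMod p, x ≠ 0 → ∃ a, a < 4 ∧ ∃ j, j < f ∧ x = ψ ^ (a + 4 * j) := by
    intro x hx
    obtain ⟨n, hn⟩ := mem_powers_iff_mem_zpowers.mpr (hθ (Units.mk0 x hx))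
    have hxn : x = ψ ^ n := by
      have := congrArg (Units.val) hn
      push_cast at this
      exact this.symm
    have hlt : n % (4 * f) < 4 * f := Nat.mod_lt _ (by omega)
    refine ⟨(n % (4 * f)) % 4, by omega, (n % (4 * f)) / 4, by omega, ?_⟩
    rw [hxn, ← pow_mod_orderOf, hordψ]
    congr 1
    omega
  -- key shift identity for sums
  have hshift : ∀ m j0 : ℕ, j0 < f →
      ∑ x ∈ Finset.univ.filter (fun x : ZMod p => ∃ j, j < f ∧
          (x = ψ ^ (0 + 4 * j) ∨ x = ψ ^ (1 + 4 * j))), b (ψ ^ (m + 4 * j0) * x)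
        = ∑ y ∈ Finset.univ.filter (fun y : ZMod p => ∃ j, j < f ∧
          (y = ψ ^ (m + 4 * j) ∨ y = ψ ^ ((m + 1) + 4 * j))), b y := by
    intro m j0 hj0
    have hK : ψ ^ (m + 4 * j0) ≠ 0 := pow_ne_zero _ hψne
    refine Finset.sum_nbij' (fun x => ψ ^ (m + 4 * j0) * x)
      (fun y => (ψ ^ (m + 4 * j0))⁻¹ * y) ?_ ?_ ?_ ?_ ?_
    · intro x hx
      rw [Finset.mem_filter] at hx ⊢
      refine ⟨Finset.mem_univ _, ?_⟩
      obtain ⟨j, hj, hx'⟩ := hx.2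
      rcases hx' with h | h
      · obtain ⟨j', hj', h'⟩ := (aux_mul hψne hψ4f hfpos m j0 hj0 0 x).mp ⟨j, hj, h⟩
        exact ⟨j', hj', Or.inl h'⟩
      · obtain ⟨j', hj', h'⟩ := (aux_mul hψne hψ4f hfpos m j0 hj0 1 x).mp ⟨j, hj, h⟩
        exact ⟨j', hj', Or.inr h'⟩
    · intro y hy
      rw [Finset.mem_filter] at hy ⊢
      refine ⟨Finset.mem_univ _, ?_⟩
      obtain ⟨j, hj, hy'⟩ := hy.2
      rcases hy' with h | h
      · obtain ⟨j', hj', h'⟩ := (aux_mul hψne hψ4f hfpos m j0 hj0 0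
          ((ψ ^ (m + 4 * j0))⁻¹ * y)).mpr ⟨j, hj, by
            rw [mul_inv_cancel_left₀ hK]; exact h⟩
        exact ⟨j', hj', Or.inl h'⟩
      · obtain ⟨j', hj', h'⟩ := (aux_mul hψne hψ4f hfpos m j0 hj0 1
          ((ψ ^ (m + 4 * j0))⁻¹ * y)).mpr ⟨j, hj, by
            rw [mul_inv_cancel_left₀ hK]; exact h⟩
        exact ⟨j', hj', Or.inr h'⟩
    · intro x _; exact inv_mul_cancel_left₀ hK x
    · intro y _; exact mul_inv_cancel_left₀ hK y
    · intro x _; rfl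
  -- the canonical A-sets
  set A0 : Finset (ZMod p) := Finset.univ.filter (fun x : ZMod p => ∃ j, j < f ∧
      (x = ψ ^ (0 + 4 * j) ∨ x = ψ ^ (1 + 4 * j))) with hA0
  set A1 : Finset (ZMod p) := Finset.univ.filter (fun x : ZMod p => ∃ j, j < f ∧
      (x = ψ ^ (1 + 4 * j) ∨ x = ψ ^ (2 + 4 * j))) with hA1
  set A2 : Finset (ZMod p) := Finset.univ.filter (fun x : ZMod p => ∃ j, j < f ∧
      (x = ψ ^ (2 + 4 * j) ∨ x = ψ ^ (3 + 4 * j))) with hA2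
  set A3 : Finset (ZMod p) := Finset.univ.filter (fun x : ZMod p => ∃ j, j < f ∧
      (x = ψ ^ (3 + 4 * j) ∨ x = ψ ^ (4 + 4 * j))) with hA3
  -- exponent 4 + 4j is the same class as 0 + 4j
  have h40 : ∀ x : ZMod p, (∃ j, j < f ∧ x = ψ ^ (4 + 4 * j)) ↔
      (∃ j, j < f ∧ x = ψ ^ (0 + 4 * j)) := by
    intro x
    constructor
    · rintro ⟨j, hj, rfl⟩
      refine ⟨(j + 1) % f, Nat.mod_lt _ hfpos, ?_⟩
      rw [show 4 + 4 * j = 0 + 4 * (j + 1) by ring]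
      exact aux_red ψ hψ4f 0 (j + 1)
    · rintro ⟨j, hj, rfl⟩
      rcases Nat.eq_zero_or_pos j with rfl | hjpos
      · exact ⟨f - 1, by omega, by rw [show 4 + 4 * (f - 1) = 4 * f by omega, hψ4f]; simp⟩
      · exact ⟨j - 1, by omega, by congr 1; omega⟩
  -- sum over all nonzero elements is 1
  have hgeom : ∑ t ∈ Finset.range p, β ^ t = 0 := by
    have hβ1 : β ≠ 1 := by
      intro h
      rw [h, orderOf_one] at hβ
      omega
    have hβp : β ^ p = 1 := by rw [← hβ]; exact pow_orderOf_eq_one β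
    rw [geom_sum_eq hβ1, hβp, sub_self, zero_div]
  have hnz : ∑ x ∈ Finset.univ.filter (fun x : ZMod p => x ≠ 0), b x = 1 := by
    have h1 : ∑ x ∈ Finset.univ.filter (fun x : ZMod p => x ≠ 0), b x
        + ∑ x ∈ Finset.univ.filter (fun x : ZMod p => ¬ x ≠ 0), b x
        = ∑ x : ZMod p, b x := Finset.sum_filter_add_sum_filter_not _ _ _
    have h2 : ∑ x : ZMod p, b x = 0 := by
      rw [← hgeom]
      refine Finset.sum_nbij' (fun x : ZMod p => x.val) (fun t : ℕ => ((t : ZMod p)))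
        ?_ ?_ ?_ ?_ ?_
      · intro x _; exact Finset.mem_range.mpr (ZMod.val_lt x)
      · intro t _; exact Finset.mem_univ _
      · intro x _; exact ZMod.natCast_rightInverse x
      · intro t ht
        simp [ZMod.val_natCast, Nat.mod_eq_of_lt (Finset.mem_range.mp ht)]
      · intro x _; rfl
    have h3 : Finset.univ.filter (fun x : ZMod p => ¬ x ≠ 0) = {0} := by
      ext x; simp
    rw [h2, h3] at h1
    have h4 : b 0 = 1 := by rw [hbdef]; simp
    rw [Finset.sum_singleton, h4] at h1
    have := CharTwo.add_self_eq_zero (∑ x ∈ Finset.univ.filter (fun x : ZMod p => x ≠ 0), b x)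
    linear_combination this - h1
  -- partitions
  have hdisjsum : ∀ (s t : Finset (ZMod p)), Disjoint s t → s ∪ t =
      Finset.univ.filter (fun x : ZMod p => x ≠ 0) →
      ∑ x ∈ s, b x + ∑ x ∈ t, b x = 1 := by
    intro s t hd hu
    rw [← Finset.sum_union hd, hu, hnz]
  have hpart02 : ∑ x ∈ A0, b x + ∑ x ∈ A2, b x = 1 := by
    apply hdisjsum
    · rw [Finset.disjoint_left]
      intro x hx0 hx2
      rw [hA0, Finset.mem_filter] at hx0
      rw [hA2, Finset.mem_filter] at hx2
      obtain ⟨j, hj, h⟩ := hx0.2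
      obtain ⟨j', hj', h'⟩ := hx2.2
      rcases h with h | h <;> rcases h' with h' | h'
      · exact hQdisj 0 2 (by omega) (by omega) (by omega) x ⟨j, hj, h⟩ ⟨j', hj', h'⟩
      · exact hQdisj 0 3 (by omega) (by omega) (by omega) x ⟨j, hj, h⟩ ⟨j', hj', h'⟩
      · exact hQdisj 1 2 (by omega) (by omega) (by omega) x ⟨j, hj, h⟩ ⟨j', hj', h'⟩
      · exact hQdisj 1 3 (by omega) (by omega) (by omega) x ⟨j, hj, h⟩ ⟨j', hj', h'⟩
    · ext x
      simp only [hA0, hA2, Finset.mem_union, Finset.mem_filter, Finset.mem_univ, true_and]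
      constructor
      · rintro (⟨j, hj, h | h⟩ | ⟨j, hj, h | h⟩) <;>
          exact h ▸ pow_ne_zero _ hψne
      · intro hx
        obtain ⟨a, ha, j, hj, hx'⟩ := hcover x hx
        interval_cases a
        · exact Or.inl ⟨j, hj, Or.inl hx'⟩
        · exact Or.inl ⟨j, hj, Or.inr hx'⟩
        · exact Or.inr ⟨j, hj, Or.inl hx'⟩
        · exact Or.inr ⟨j, hj, Or.inr hx'⟩
  have hpart13 : ∑ x ∈ A1, b x + ∑ x ∈ A3, b x = 1 := by
    apply hdisjsum
    · rw [Finset.disjoint_left]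
      intro x hx1 hx3
      rw [hA1, Finset.mem_filter] at hx1
      rw [hA3, Finset.mem_filter] at hx3
      obtain ⟨j, hj, h⟩ := hx1.2
      obtain ⟨j', hj', h'⟩ := hx3.2
      rcases h with h | h <;> rcases h' with h' | h'
      · exact hQdisj 1 3 (by omega) (by omega) (by omega) x ⟨j, hj, h⟩ ⟨j', hj', h'⟩
      · exact hQdisj 1 0 (by omega) (by omega) (by omega) x ⟨j, hj, h⟩
          ((h40 x).mp ⟨j', hj', h'⟩)
      · exact hQdisj 2 3 (by omega) (by omega) (by omega) x ⟨j, hj, h⟩ ⟨j', hj', h'⟩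
      · exact hQdisj 2 0 (by omega) (by omega) (by omega) x ⟨j, hj, h⟩
          ((h40 x).mp ⟨j', hj', h'⟩)
    · ext x
      simp only [hA1, hA3, Finset.mem_union, Finset.mem_filter, Finset.mem_univ, true_and]
      constructor
      · rintro (⟨j, hj, h | h⟩ | ⟨j, hj, h | h⟩) <;>
          exact h ▸ pow_ne_zero _ hψne
      · intro hx
        obtain ⟨a, ha, j, hj, hx'⟩ := hcover x hx
        interval_cases a
        · exact Or.inr (by
            obtain ⟨j', hj', h'⟩ := (h40 x).mpr ⟨j, hj, hx'⟩
            exact ⟨j', hj', Or.inr h'⟩)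
        · exact Or.inl ⟨j, hj, Or.inl hx'⟩
        · exact Or.inl ⟨j, hj, Or.inr hx'⟩
        · exact Or.inr ⟨j, hj, Or.inl hx'⟩
  -- expressing Sβ, Tβ and the k-sum
  have hS : Sβ = ∑ x ∈ A0, b x := by
    have h1 : Sβ = ∑ t ∈ DD01, b ((t : ZMod p)) :=
      Finset.sum_congr rfl (fun t _ => hb t)
    rw [h1]
    have h2 := aux_trans β (fun x : ZMod p => ∃ j, j < f ∧
      (x = ψ ^ (4 * j) ∨ x = ψ ^ (1 + 4 * j))) inferInstance inferInstance b
    rw [h2]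
    rw [hA0]
    apply Finset.sum_congr _ (fun _ _ => rfl)
    ext x
    simp only [Finset.mem_filter, Finset.mem_univ, true_and]
    constructor <;> rintro ⟨j, hj, h | h⟩
    · exact ⟨j, hj, Or.inl (by rw [h]; congr 1; omega)⟩
    · exact ⟨j, hj, Or.inr h⟩
    · exact ⟨j, hj, Or.inl (by rw [h]; congr 1; omega)⟩
    · exact ⟨j, hj, Or.inr h⟩
  have hT : Tβ = ∑ x ∈ A1, b x := by
    have h1 : Tβ = ∑ t ∈ DD12, b ((t : ZMod p)) :=
      Finset.sum_congr rfl (fun t _ => hb t)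
    rw [h1]
    have h2 := aux_trans β (fun x : ZMod p => ∃ j, j < f ∧
      (x = ψ ^ (1 + 4 * j) ∨ x = ψ ^ (2 + 4 * j))) inferInstance inferInstance b
    rw [h2, hA1]
  have hmain : ∑ t ∈ DD01, (β ^ k.val) ^ t = ∑ x ∈ A0, b (k * x) := by
    have h1 : ∀ t : ℕ, (β ^ k.val) ^ t = b (k * (t : ZMod p)) := by
      intro t
      rw [← pow_mul, hb (k.val * t)]
      congr 1
      push_cast
      rw [ZMod.natCast_rightInverse k]
    calc ∑ t ∈ DD01, (β ^ k.val) ^ t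
        = ∑ t ∈ DD01, b (k * (t : ZMod p)) := Finset.sum_congr rfl (fun t _ => h1 t)
      _ = ∑ x ∈ Finset.univ.filter (fun x : ZMod p => ∃ j, j < f ∧
            (x = ψ ^ (4 * j) ∨ x = ψ ^ (1 + 4 * j))), b (k * x) :=
          aux_trans β (fun x : ZMod p => ∃ j, j < f ∧
            (x = ψ ^ (4 * j) ∨ x = ψ ^ (1 + 4 * j))) inferInstance inferInstance (fun x => b (k * x))
      _ = ∑ x ∈ A0, b (k * x) := by
          apply Finset.sum_congr _ (fun _ _ => rfl)
          rw [hA0]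
          ext x
          simp only [Finset.mem_filter, Finset.mem_univ, true_and]
          constructor <;> rintro ⟨j, hj, h | h⟩
          · exact ⟨j, hj, Or.inl (by rw [h]; congr 1; omega)⟩
          · exact ⟨j, hj, Or.inr h⟩
          · exact ⟨j, hj, Or.inl (by rw [h]; congr 1; omega)⟩
          · exact ⟨j, hj, Or.inr h⟩
  refine ⟨?_, ?_, ?_, ?_⟩
  · rintro ⟨j0, hj0, hkeq⟩
    rw [hmain, hS]
    have hk0 : k = ψ ^ (0 + 4 * j0) := by rw [hkeq]; congr 1; omega
    rw [hk0, hshift 0 j0 hj0, hA0]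
  · rintro ⟨j0, hj0, hkeq⟩
    rw [hmain, hT, hkeq, hshift 1 j0 hj0, hA1]
  · rintro ⟨j0, hj0, hkeq⟩
    rw [hmain, hS, hkeq, hshift 2 j0 hj0]
    rw [show (2 : ℕ) + 1 = 3 from rfl, ← hA2]
    have h2 := CharTwo.add_self_eq_zero (∑ x ∈ A0, b x)
    linear_combination hpart02 - h2
  · rintro ⟨j0, hj0, hkeq⟩
    rw [hmain, hT, hkeq, hshift 3 j0 hj0]
    rw [show (3 : ℕ) + 1 = 4 from rfl, ← hA3]
    have h2 := CharTwo.add_self_eq_zero (∑ x ∈ A1, b x)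
    linear_combination hpart13 - h2
end
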